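/- arXiv:1912.07713 — 3 statements merged into one kernel-verified Lean document; each statement's English description precedes it below -/
import Mathlib

section
/- The map Φ from the language L to the class X, defined by Φ(1) = 1, Φ(a) = the monotone permutation of size |a| and sign of a for a ∈ M, Φ((a,b)v) = a ⊕ Φ(v) ⊕ b when (a,b) ∈ A⁺, and Φ((a,b)v) = a ⊖ Φ(v) ⊖ b when (a,b) ∈ A⁻, is a size-preserving bijection. -/
open Equiv Filter

/-- A permutation pattern: a size together with a permutation of that size. -/
abbrev Pattern := Σ n : ℕ, Equiv.Perm (Fin n)

/-- Direct sum of permutations: `α` to the left of and below `β`. -/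
def sumPerm {m n : ℕ} (α : Equiv.Perm (Fin m)) (β : Equiv.Perm (Fin n)) :
    Equiv.Perm (Fin (m + n)) :=
  finSumFinEquiv.symm.trans ((α.sumCongr β).trans finSumFinEquiv)

/-- Skew sum of permutations: `α` to the left of and above `β`. -/
def skewPerm {m n : ℕ} (α : Equiv.Perm (Fin m)) (β : Equiv.Perm (Fin n)) :
    Equiv.Perm (Fin (m + n)) :=
  finSumFinEquiv.symm.trans ((α.sumCongr β).trans
    ((Equiv.sumComm (Fin m) (Fin n)).trans (finSumFinEquiv.trans (finCongr (Nat.add_comm n m)))))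

/-- Pattern containment: `Contains p q` means `p` is contained (as a pattern) in `q`. -/
def Contains (p q : Pattern) : Prop :=
  ∃ f : Fin p.1 → Fin q.1, StrictMono f ∧ ∀ s t, p.2 s < p.2 t ↔ q.2 (f s) < q.2 (f t)

def sumP (p q : Pattern) : Pattern := ⟨p.1 + q.1, sumPerm p.2 q.2⟩
def skewP (p q : Pattern) : Pattern := ⟨p.1 + q.1, skewPerm p.2 q.2⟩

/-- The singleton permutation 1. -/
def onePat : Pattern := ⟨1, 1⟩
/-- The increasing permutation of size `k`. -/
def idPat (k : ℕ) : Pattern := ⟨k, 1⟩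
/-- The decreasing permutation of size `k`. -/
def revPat (k : ℕ) : Pattern := ⟨k, Fin.revPerm⟩

def BeginsWithMin (p : Pattern) : Prop := ∃ h : 0 < p.1, p.2 ⟨0, h⟩ = ⟨0, h⟩
def EndsWithMax (p : Pattern) : Prop :=
  ∃ h : 0 < p.1, p.2 ⟨p.1 - 1, by omega⟩ = ⟨p.1 - 1, by omega⟩
def BeginsWithMax (p : Pattern) : Prop :=
  ∃ h : 0 < p.1, p.2 ⟨0, h⟩ = ⟨p.1 - 1, by omega⟩
def EndsWithMin (p : Pattern) : Prop :=
  ∃ h : 0 < p.1, p.2 ⟨p.1 - 1, by omega⟩ = ⟨0, h⟩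

def IsIncreasingP (p : Pattern) : Prop := ∀ i j : Fin p.1, i ≤ j → p.2 i ≤ p.2 j
def IsDecreasingP (p : Pattern) : Prop := ∀ i j : Fin p.1, i ≤ j → p.2 j ≤ p.2 i
/-- Monotone permutations (increasing or decreasing). -/
def MonotoneP (p : Pattern) : Prop := IsIncreasingP p ∨ IsDecreasingP p
/-- A crossed permutation is one that is not monotone. -/
def CrossedP (p : Pattern) : Prop := ¬ MonotoneP p
/-- Positive: size at least 2, begins with its minimum or ends with its maximum. -/
def PositiveP (p : Pattern) : Prop := 2 ≤ p.1 ∧ (BeginsWithMin p ∨ EndsWithMax p)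
/-- Negative: size at least 2, begins with its maximum or ends with its minimum. -/
def NegativeP (p : Pattern) : Prop := 2 ≤ p.1 ∧ (BeginsWithMax p ∨ EndsWithMin p)

/-- The class X: the closure of {1} under π ↦ 1⊕π, 1⊖π, π⊕1, π⊖1. -/
inductive InX : Pattern → Prop
  | base : InX onePat
  | sumL {p : Pattern} : InX p → InX (sumP onePat p)
  | skewL {p : Pattern} : InX p → InX (skewP onePat p)
  | sumR {p : Pattern} : InX p → InX (sumP p onePat)
  | skewR {p : Pattern} : InX p → InX (skewP p onePat)

/-- A letter of A⁺: a pair of nonnegative integers other than (0,0). -/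
def isAPlusL (p : ℤ × ℤ) : Prop := 0 ≤ p.1 ∧ 0 ≤ p.2 ∧ p ≠ (0, 0)
/-- A letter of A⁻: a pair of nonpositive integers other than (0,0). -/
def isAMinusL (p : ℤ × ℤ) : Prop := p.1 ≤ 0 ∧ p.2 ≤ 0 ∧ p ≠ (0, 0)
/-- A letter of M: an integer of absolute value at least 2. -/
def isML (m : ℤ) : Prop := 2 ≤ |m|

/-- Sign of an A-letter (true = positive). -/
def signA (p : ℤ × ℤ) : Bool := decide (0 ≤ p.1 ∧ 0 ≤ p.2)
/-- Sign of an M-letter (true = positive). -/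
def signM (m : ℤ) : Bool := decide (0 < m)

/-- A word of the language L: either the symbol 1, or a word of A-letters followed
by a final M-letter. -/
inductive LWord : Type
  | one : LWord
  | word (ws : List (ℤ × ℤ)) (m : ℤ) : LWord

/-- Validity: the A-letters lie in A⁺ ∪ A⁻, the final letter is in M, and the signs
of the successive letters alternate. -/
def ValidL : LWord → Prop
  | .one => True
  | .word ws m => isML m ∧ (∀ p ∈ ws, isAPlusL p ∨ isAMinusL p) ∧
      List.Chain' (· ≠ ·) (ws.map signA ++ [signM m])

/-- The size of a word. -/
def sizeL : LWord → ℕ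
  | .one => 1
  | .word ws m => (ws.map (fun p => p.1.natAbs + p.2.natAbs)).sum + m.natAbs

/-- The monotone permutation associated to an M-letter: increasing of size m if m > 0,
decreasing of size |m| otherwise. -/
def monoPat (m : ℤ) : Pattern := if 0 < m then idPat m.toNat else revPat (-m).toNat

/-- The map Φ on words, via the list of A-letters and the final M-letter. -/
def PhiW : List (ℤ × ℤ) → ℤ → Pattern
  | [], m => monoPat m
  | p :: v, m =>
      if 0 ≤ p.1 ∧ 0 ≤ p.2 then
        sumP (sumP (idPat p.1.toNat) (PhiW v m)) (idPat p.2.toNat)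
      else
        skewP (skewP (revPat (-p.1).toNat) (PhiW v m)) (revPat (-p.2).toNat)

/-- The map Φ : L → X. -/
def PhiL : LWord → Pattern
  | .one => onePat
  | .word ws m => PhiW ws m

namespace Dev
def emb (p : Pattern) : ℕ → ℕ := fun i => if h : i < p.1 then (p.2 ⟨i, h⟩ : ℕ) else i

lemma emb_lt {p : Pattern} {i : ℕ} (h : i < p.1) : emb p i < p.1 := by
  simp only [emb, dif_pos h]; exact (p.2 ⟨i, h⟩).isLt

lemma emb_ge {p : Pattern} {i : ℕ} (h : p.1 ≤ i) : emb p i = i := by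
  simp only [emb, dif_neg (not_lt.2 h)]

lemma pattern_ext {p q : Pattern} (h1 : p.1 = q.1) (h2 : ∀ i, emb p i = emb q i) : p = q := by
  obtain ⟨m, α⟩ := p; obtain ⟨n, β⟩ := q
  subst h1
  suffices hh : α = β by rw [hh]
  ext x
  have := h2 x.val
  simp only [emb, dif_pos x.isLt] at this
  exact this

lemma emb_sumP (p q : Pattern) (i : ℕ) :
    emb (sumP p q) i = if i < p.1 then emb p i else p.1 + emb q (i - p.1) := by
  by_cases h : i < p.1
  · rw [if_pos h]
    have hi : i < p.1 + q.1 := by omega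
    simp only [emb, dif_pos (show i < (sumP p q).1 from hi), dif_pos h]
    show ((sumPerm p.2 q.2) ⟨i, hi⟩ : ℕ) = _
    simp only [sumPerm, Equiv.trans_apply]
    rw [show (⟨i, hi⟩ : Fin (p.1 + q.1)) = Fin.castAdd q.1 ⟨i, h⟩ from rfl,
      finSumFinEquiv_symm_apply_castAdd]
    simp
  · rw [if_neg h]
    by_cases h2 : i - p.1 < q.1
    · have hi : i < p.1 + q.1 := by omega
      simp only [emb, dif_pos (show i < (sumP p q).1 from hi), dif_pos h2]
      show ((sumPerm p.2 q.2) ⟨i, hi⟩ : ℕ) = _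
      simp only [sumPerm, Equiv.trans_apply]
      rw [show (⟨i, hi⟩ : Fin (p.1 + q.1)) = Fin.natAdd p.1 ⟨i - p.1, h2⟩ from (by
        apply Fin.ext; simp; omega), finSumFinEquiv_symm_apply_natAdd]
      simp
    · simp only [emb, dif_neg (show ¬ i < (sumP p q).1 by simp only [sumP]; omega), dif_neg h2]
      omega

lemma emb_skewP (p q : Pattern) (i : ℕ) :
    emb (skewP p q) i = if i < p.1 then q.1 + emb p i
      else if i < p.1 + q.1 then emb q (i - p.1) else i := by
  by_cases h : i < p.1
  · rw [if_pos h]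
    have hi : i < p.1 + q.1 := by omega
    simp only [emb, dif_pos (show i < (skewP p q).1 from hi), dif_pos h]
    show ((skewPerm p.2 q.2) ⟨i, hi⟩ : ℕ) = _
    simp only [skewPerm, Equiv.trans_apply]
    rw [show (⟨i, hi⟩ : Fin (p.1 + q.1)) = Fin.castAdd q.1 ⟨i, h⟩ from rfl,
      finSumFinEquiv_symm_apply_castAdd]
    simp [Nat.add_comm]
  · rw [if_neg h]
    by_cases h2 : i - p.1 < q.1
    · have hi : i < p.1 + q.1 := by omega
      rw [if_pos hi]
      simp only [emb, dif_pos (show i < (skewP p q).1 from hi), dif_pos h2]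
      show ((skewPerm p.2 q.2) ⟨i, hi⟩ : ℕ) = _
      simp only [skewPerm, Equiv.trans_apply]
      rw [show (⟨i, hi⟩ : Fin (p.1 + q.1)) = Fin.natAdd p.1 ⟨i - p.1, h2⟩ from (by
        apply Fin.ext; simp; omega), finSumFinEquiv_symm_apply_natAdd]
      simp
    · rw [if_neg (show ¬ i < p.1 + q.1 by omega)]
      simp only [emb, dif_neg (show ¬ i < (skewP p q).1 by simp only [skewP]; omega)]

lemma emb_onePat (i : ℕ) : emb onePat i = i := by
  show (if h : i < 1 then ((1 : Equiv.Perm (Fin 1)) ⟨i, h⟩ : ℕ) else i) = i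
  split <;> simp <;> omega

lemma emb_idPat (k i : ℕ) : emb (idPat k) i = i := by
  show (if h : i < k then ((1 : Equiv.Perm (Fin k)) ⟨i, h⟩ : ℕ) else i) = i
  split <;> simp

lemma emb_revPat (k i : ℕ) : emb (revPat k) i = if i < k then k - 1 - i else i := by
  show (if h : i < k then ((Fin.revPerm : Equiv.Perm (Fin k)) ⟨i, h⟩ : ℕ) else i) = _
  split_ifs with h
  · simp only [Fin.revPerm_apply, Fin.val_rev]
    omega
  · rfl

end Dev
namespace Dev

lemma sumP_fst (p q : Pattern) : (sumP p q).1 = p.1 + q.1 := Eq.trans rfl rfl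
lemma skewP_fst (p q : Pattern) : (skewP p q).1 = p.1 + q.1 := Eq.trans rfl rfl
lemma idPat_fst (k : ℕ) : (idPat k).1 = k := Eq.trans rfl rfl
lemma revPat_fst (k : ℕ) : (revPat k).1 = k := Eq.trans rfl rfl
lemma onePat_fst : onePat.1 = 1 := Eq.trans rfl rfl

lemma emb_posBlock (A B : ℕ) (Q : Pattern) (i : ℕ) :
    emb (sumP (sumP (idPat A) Q) (idPat B)) i =
      if i < A then i else A + emb Q (i - A) := by
  rw [emb_sumP, emb_sumP]
  simp only [sumP_fst, idPat_fst, emb_idPat]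
  by_cases h2 : i - A < Q.1
  · have := emb_lt (p := Q) h2
    split_ifs <;> omega
  · rw [emb_ge (p := Q) (not_lt.1 h2)]
    split_ifs <;> omega

lemma emb_negBlock (A B : ℕ) (Q : Pattern) (i : ℕ) :
    emb (skewP (skewP (revPat A) Q) (revPat B)) i =
      if i < A then A + Q.1 + B - 1 - i
      else if i < A + Q.1 then B + emb Q (i - A)
      else if i < A + Q.1 + B then A + Q.1 + B - 1 - i
      else i := by
  rw [emb_skewP, emb_skewP]
  simp only [skewP_fst, revPat_fst, emb_revPat]
  by_cases h2 : i - A < Q.1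
  · have := emb_lt (p := Q) h2
    split_ifs <;> omega
  · rw [emb_ge (p := Q) (not_lt.1 h2)]
    split_ifs <;> omega

lemma idPat_one : idPat 1 = onePat := rfl

lemma revPat_one : revPat 1 = onePat := by
  refine pattern_ext rfl fun i => ?_
  rw [emb_revPat, emb_onePat]
  split <;> omega

lemma sumP_id0_right (p : Pattern) : sumP p (idPat 0) = p := by
  refine pattern_ext rfl fun i => ?_
  rw [emb_sumP]
  simp only [emb_idPat]
  by_cases h : i < p.1
  · rw [if_pos h]
  · rw [if_neg h, emb_ge (not_lt.1 h)]
    omega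

lemma sumP_id0_left (p : Pattern) : sumP (idPat 0) p = p := by
  refine pattern_ext (Nat.zero_add _) fun i => ?_
  rw [emb_sumP]
  simp only [idPat_fst]
  rw [if_neg (by omega), Nat.sub_zero]
  omega

lemma skewP_rev0_right (p : Pattern) : skewP p (revPat 0) = p := by
  refine pattern_ext rfl fun i => ?_
  rw [emb_skewP]
  simp only [revPat_fst, Nat.add_zero, Nat.zero_add]
  by_cases h : i < p.1
  · rw [if_pos h]
  · rw [if_neg h, if_neg h, emb_ge (not_lt.1 h)]

lemma skewP_rev0_left (p : Pattern) : skewP (revPat 0) p = p := by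
  refine pattern_ext (Nat.zero_add _) fun i => ?_
  rw [emb_skewP]
  simp only [revPat_fst, Nat.zero_add, Nat.sub_zero]
  rw [if_neg (by omega)]
  by_cases h : i < p.1
  · rw [if_pos h]
  · rw [if_neg h, emb_ge (not_lt.1 h)]

lemma sumP_assoc (p q r : Pattern) : sumP (sumP p q) r = sumP p (sumP q r) := by
  refine pattern_ext (Nat.add_assoc _ _ _) fun i => ?_
  simp only [emb_sumP, sumP_fst, Nat.sub_sub]
  split_ifs <;> omega

lemma skewP_assoc (p q r : Pattern) : skewP (skewP p q) r = skewP p (skewP q r) := by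
  refine pattern_ext (Nat.add_assoc _ _ _) fun i => ?_
  simp only [emb_skewP, skewP_fst, Nat.sub_sub]
  split_ifs <;> omega

lemma sumP_id_id (a b : ℕ) : sumP (idPat a) (idPat b) = idPat (a + b) := by
  refine pattern_ext rfl fun i => ?_
  simp only [emb_sumP, emb_idPat, idPat_fst]
  split_ifs <;> omega

lemma skewP_rev_rev (a b : ℕ) : skewP (revPat a) (revPat b) = revPat (a + b) := by
  refine pattern_ext rfl fun i => ?_
  simp only [emb_skewP, emb_revPat, revPat_fst]
  split_ifs <;> omega

end Dev
namespace Dev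

lemma monoPat_fst (m : ℤ) : (monoPat m).1 = m.natAbs := by
  unfold monoPat
  split <;> simp only [idPat_fst, revPat_fst] <;> omega

lemma PhiW_fst : ∀ (ws : List (ℤ × ℤ)) (m : ℤ),
    (∀ p ∈ ws, isAPlusL p ∨ isAMinusL p) →
    (PhiW ws m).1 = sizeL (.word ws m)
  | [], m, _ => by simp [PhiW, sizeL, monoPat_fst]
  | p :: v, m, hv => by
    have ih := PhiW_fst v m (fun q hq => hv q (List.mem_cons_of_mem _ hq))
    have hp := hv p (List.mem_cons_self)
    simp only [PhiW, sizeL, List.map_cons, List.sum_cons] at *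
    split <;> rename_i h
    · simp only [sumP_fst, idPat_fst, ih]
      have : 0 ≤ p.1 ∧ 0 ≤ p.2 := h
      omega
    · simp only [skewP_fst, revPat_fst, ih]
      rcases hp with ⟨h1, h2, _⟩ | ⟨h1, h2, _⟩
      · exact absurd ⟨h1, h2⟩ h
      · omega

lemma InX_congr {p q : Pattern} (h : p = q) (hp : InX p) : InX q := h ▸ hp

lemma InX_idPat {k : ℕ} (hk : 1 ≤ k) : InX (idPat k) := by
  induction k, hk using Nat.le_induction with
  | base => exact InX_congr idPat_one.symm InX.base
  | succ k hk ih =>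
    exact InX_congr (by rw [← sumP_id_id, idPat_one]) (InX.sumR ih)

lemma InX_revPat {k : ℕ} (hk : 1 ≤ k) : InX (revPat k) := by
  induction k, hk using Nat.le_induction with
  | base => exact InX_congr revPat_one.symm InX.base
  | succ k hk ih =>
    exact InX_congr (by rw [← skewP_rev_rev, revPat_one]) (InX.skewR ih)

lemma InX_sumId_left : ∀ (a : ℕ) (q : Pattern), InX q → InX (sumP (idPat a) q)
  | 0, q, hq => InX_congr (sumP_id0_left q).symm hq
  | a + 1, q, hq => by
    have h1 : InX (sumP (idPat a) (sumP onePat q)) :=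
      InX_sumId_left a _ (InX.sumL hq)
    refine InX_congr ?_ h1
    rw [← sumP_assoc, ← idPat_one, sumP_id_id]

lemma InX_sumId_right : ∀ (b : ℕ) (q : Pattern), InX q → InX (sumP q (idPat b))
  | 0, q, hq => InX_congr (sumP_id0_right q).symm hq
  | b + 1, q, hq => by
    have h1 : InX (sumP (sumP q (idPat b)) onePat) :=
      InX.sumR (InX_sumId_right b q hq)
    refine InX_congr ?_ h1
    rw [sumP_assoc, ← idPat_one, sumP_id_id]

lemma InX_skewRev_left : ∀ (a : ℕ) (q : Pattern), InX q → InX (skewP (revPat a) q)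
  | 0, q, hq => InX_congr (skewP_rev0_left q).symm hq
  | a + 1, q, hq => by
    have h1 : InX (skewP (revPat a) (skewP onePat q)) :=
      InX_skewRev_left a _ (InX.skewL hq)
    refine InX_congr ?_ h1
    rw [← skewP_assoc, ← revPat_one, skewP_rev_rev]

lemma InX_skewRev_right : ∀ (b : ℕ) (q : Pattern), InX q → InX (skewP q (revPat b))
  | 0, q, hq => InX_congr (skewP_rev0_right q).symm hq
  | b + 1, q, hq => by
    have h1 : InX (skewP (skewP q (revPat b)) onePat) :=
      InX.skewR (InX_skewRev_right b q hq)
    refine InX_congr ?_ h1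
    rw [skewP_assoc, ← revPat_one, skewP_rev_rev]

lemma InX_monoPat {m : ℤ} (h : 1 ≤ m.natAbs) : InX (monoPat m) := by
  unfold monoPat
  split
  · exact InX_idPat (by omega)
  · exact InX_revPat (by omega)

lemma InX_PhiW : ∀ (ws : List (ℤ × ℤ)) (m : ℤ), 1 ≤ m.natAbs →
    (∀ p ∈ ws, isAPlusL p ∨ isAMinusL p) → InX (PhiW ws m)
  | [], m, hm, _ => InX_monoPat hm
  | p :: v, m, hm, hv => by
    have ih := InX_PhiW v m hm (fun q hq => hv q (List.mem_cons_of_mem _ hq))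
    simp only [PhiW]
    split
    · exact InX_sumId_right _ _ (InX_sumId_left _ _ ih)
    · exact InX_skewRev_right _ _ (InX_skewRev_left _ _ ih)

end Dev
namespace Dev

def fsign (ws : List (ℤ × ℤ)) (m : ℤ) : Bool :=
  match ws with
  | [] => signM m
  | p :: _ => signA p

def goodPos (P : Pattern) : Prop :=
  (emb P 0 = 0 ∨ emb P (P.1 - 1) = P.1 - 1) ∧ emb P 0 ≠ P.1 - 1 ∧ emb P (P.1 - 1) ≠ 0

def goodNeg (P : Pattern) : Prop :=
  (emb P 0 = P.1 - 1 ∨ emb P (P.1 - 1) = 0) ∧ emb P 0 ≠ 0 ∧ emb P (P.1 - 1) ≠ P.1 - 1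

lemma not_goodPos_goodNeg {P : Pattern} (hp : goodPos P) (hn : goodNeg P) : False := by
  obtain ⟨h1, h2', h3⟩ := hp
  obtain ⟨g1, g2, g3⟩ := hn
  rcases h1 with h | h
  · exact g2 h
  · exact g3 h

lemma valid_tail {p : ℤ × ℤ} {v : List (ℤ × ℤ)} {m : ℤ}
    (h : ValidL (.word (p :: v) m)) :
    ValidL (.word v m) ∧ signA p ≠ fsign v m := by
  obtain ⟨hm, hl, hc⟩ := h
  refine ⟨⟨hm, fun q hq => hl q (List.mem_cons_of_mem _ hq), ?_⟩, ?_⟩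
  · simp only [List.map_cons, List.cons_append] at hc
    exact hc.tail
  · simp only [List.map_cons, List.cons_append] at hc
    cases v with
    | nil => simpa [fsign] using (List.isChain_cons_cons.1 hc).1
    | cons q v' => simpa [fsign] using (List.isChain_cons_cons.1 hc).1

lemma letter_cases {p : ℤ × ℤ} (hp : isAPlusL p ∨ isAMinusL p) :
    (0 ≤ p.1 ∧ 0 ≤ p.2 ∧ 1 ≤ p.1.toNat + p.2.toNat) ∨
    (¬(0 ≤ p.1 ∧ 0 ≤ p.2) ∧ p.1 ≤ 0 ∧ p.2 ≤ 0 ∧ 1 ≤ (-p.1).toNat + (-p.2).toNat) := by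
  rcases hp with ⟨h1, h2, h3⟩ | ⟨h1, h2, h3⟩
  · left
    refine ⟨h1, h2, ?_⟩
    have : ¬(p.1 = 0 ∧ p.2 = 0) := by
      intro ⟨e1, e2⟩; exact h3 (Prod.ext e1 e2)
    omega
  · have hne : ¬(p.1 = 0 ∧ p.2 = 0) := by
      intro ⟨e1, e2⟩; exact h3 (Prod.ext e1 e2)
    by_cases hpos : 0 ≤ p.1 ∧ 0 ≤ p.2
    · left; refine ⟨hpos.1, hpos.2, ?_⟩; omega
    · right; exact ⟨hpos, h1, h2, by omega⟩

lemma isML_natAbs {m : ℤ} (h : isML m) : 2 ≤ m.natAbs := by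
  unfold isML at h; rw [Int.abs_eq_natAbs] at h; omega

lemma PhiW_fst_ge {ws : List (ℤ × ℤ)} {m : ℤ} (h : ValidL (.word ws m)) :
    2 ≤ (PhiW ws m).1 := by
  obtain ⟨hm, hl, _⟩ := h
  rw [PhiW_fst ws m hl]
  have := isML_natAbs hm
  simp only [sizeL]
  omega

lemma INV : ∀ (ws : List (ℤ × ℤ)) (m : ℤ), ValidL (.word ws m) →
    2 ≤ (PhiW ws m).1 ∧
    (fsign ws m = true → goodPos (PhiW ws m)) ∧
    (fsign ws m = false → goodNeg (PhiW ws m)) := by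
  intro ws m hv
  obtain ⟨hm, hl, hc⟩ := hv
  have hm2 : 2 ≤ m.natAbs := isML_natAbs hm
  cases ws with
  | nil =>
    simp only [PhiW, fsign, monoPat, signM]
    split <;> rename_i h
    · have hn : 2 ≤ m.toNat := by omega
      refine ⟨by simpa [idPat_fst] using hn, fun _ => ?_, fun hf => by simp at hf; omega⟩
      unfold goodPos
      simp only [emb_idPat, idPat_fst]
      exact ⟨Or.inl trivial, by omega, by omega⟩
    · have hn : 2 ≤ (-m).toNat := by omega
      refine ⟨by simpa [revPat_fst] using hn, fun ht => by simp at ht; omega, fun _ => ?_⟩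
      unfold goodNeg
      simp only [emb_revPat, revPat_fst]
      refine ⟨Or.inl ?_, ?_, ?_⟩ <;> split_ifs <;> omega
  | cons p v =>
    have hv' : ValidL (.word v m) := by
      refine ⟨hm, fun q hq => hl q (List.mem_cons_of_mem _ hq), ?_⟩
      simp only [List.map_cons, List.cons_append] at hc
      exact hc.tail
    have hq2 : 2 ≤ (PhiW v m).1 := PhiW_fst_ge hv'
    set Q := PhiW v m with hQ
    set q := Q.1 with hq
    have hQ0 : emb Q 0 < q := emb_lt (by omega)
    have hQl : emb Q (q - 1) < q := emb_lt (by omega)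
    rcases letter_cases (hl p (List.mem_cons_self)) with ⟨h1, h2, h3⟩ | ⟨hneg, h1, h2, h3⟩
    · -- positive letter
      have hsign : signA p = true := by simp [signA, h1, h2]
      set A := p.1.toNat
      set B := p.2.toNat
      have hPhi : PhiW (p :: v) m = sumP (sumP (idPat A) Q) (idPat B) := by
        simp only [PhiW, if_pos (⟨h1, h2⟩ : 0 ≤ p.1 ∧ 0 ≤ p.2)]; rfl
      have hfst2 : (sumP (sumP (idPat A) Q) (idPat B)).1 = A + q + B := rfl
      have e0 := emb_posBlock A B Q 0
      have el := emb_posBlock A B Q (A + q + B - 1)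
      rw [Nat.zero_sub] at e0
      have elv : emb (sumP (sumP (idPat A) Q) (idPat B)) (A + q + B - 1) =
          if B = 0 then A + emb Q (q - 1) else A + q + B - 1 := by
        rw [el]
        by_cases hb : B = 0
        · rw [if_pos hb, if_neg (by omega)]
          congr 2
          omega
        · rw [if_neg hb, if_neg (by omega), emb_ge (by omega : q ≤ A + q + B - 1 - A)]
          omega
      refine ⟨by rw [hPhi, hfst2]; omega, fun _ => ?_,
        fun hf => by rw [fsign] at hf; rw [hsign] at hf; simp at hf⟩
      rw [hPhi]
      unfold goodPos
      rw [hfst2, e0, elv]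
      refine ⟨?_, ?_, ?_⟩
      · by_cases ha : A = 0
        · right; rw [if_neg (by omega)]
        · left; rw [if_pos (by omega)]
      · split_ifs <;> omega
      · split_ifs <;> omega
    · -- negative letter
      have hsign : signA p = false := by
        simp only [signA, decide_eq_false_iff_not]; exact hneg
      set A := (-p.1).toNat
      set B := (-p.2).toNat
      have hPhi : PhiW (p :: v) m = skewP (skewP (revPat A) Q) (revPat B) := by
        simp only [PhiW, if_neg hneg]; rfl
      have hfst2 : (skewP (skewP (revPat A) Q) (revPat B)).1 = A + q + B := rfl
      have e0 := emb_negBlock A B Q 0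
      have el := emb_negBlock A B Q (A + q + B - 1)
      have e0v : emb (skewP (skewP (revPat A) Q) (revPat B)) 0 =
          if A = 0 then B + emb Q 0 else A + q + B - 1 := by
        rw [e0]
        by_cases ha : A = 0
        · rw [if_pos ha, if_neg (by omega), if_pos (by omega)]
          congr 2
          omega
        · rw [if_neg ha, if_pos (by omega)]
          omega
      have elv : emb (skewP (skewP (revPat A) Q) (revPat B)) (A + q + B - 1) =
          if B = 0 then B + emb Q (q - 1) else 0 := by
        rw [el]
        by_cases hb : B = 0
        · rw [if_pos hb, if_neg (by omega), if_pos (by omega)]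
          congr 2
          omega
        · rw [if_neg hb, if_neg (by omega), if_neg (by omega), if_pos (by omega)]
          omega
      refine ⟨by rw [hPhi, hfst2]; omega,
        fun ht => by rw [fsign] at ht; rw [hsign] at ht; simp at ht, fun _ => ?_⟩
      rw [hPhi]
      unfold goodNeg
      rw [hfst2, e0v, elv]
      refine ⟨?_, ?_, ?_⟩
      · by_cases ha : A = 0
        · right; rw [if_neg (by omega)]
        · left; rw [if_neg ha]
      · split_ifs <;> omega
      · split_ifs <;> omega

end Dev
namespace Dev

lemma monoPat_pos {m : ℤ} (h : 0 < m) : monoPat m = idPat m.toNat := if_pos h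
lemma monoPat_neg {m : ℤ} (h : ¬0 < m) : monoPat m = revPat (-m).toNat := if_neg h

lemma PhiW_cons_pos {a b : ℤ} (ha : 0 ≤ a) (hb : 0 ≤ b) (v : List (ℤ × ℤ)) (m : ℤ) :
    PhiW ((a, b) :: v) m = sumP (sumP (idPat a.toNat) (PhiW v m)) (idPat b.toNat) := by
  simp only [PhiW]
  rw [if_pos ⟨ha, hb⟩]

lemma PhiW_cons_neg {a b : ℤ} (hab : ¬(0 ≤ a ∧ 0 ≤ b)) (v : List (ℤ × ℤ)) (m : ℤ) :
    PhiW ((a, b) :: v) m = skewP (skewP (revPat (-a).toNat) (PhiW v m)) (revPat (-b).toNat) := by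
  simp only [PhiW]
  rw [if_neg hab]

lemma sumP_one_id (k : ℕ) : sumP onePat (idPat k) = idPat (1 + k) := by
  rw [← idPat_one, sumP_id_id]
lemma sumP_id_one (k : ℕ) : sumP (idPat k) onePat = idPat (k + 1) := by
  rw [← idPat_one, sumP_id_id]
lemma skewP_one_rev (k : ℕ) : skewP onePat (revPat k) = revPat (1 + k) := by
  rw [← revPat_one, skewP_rev_rev]
lemma skewP_rev_one (k : ℕ) : skewP (revPat k) onePat = revPat (k + 1) := by
  rw [← revPat_one, skewP_rev_rev]

lemma absorb_sumL (A B : ℕ) (Q : Pattern) :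
    sumP onePat (sumP (sumP (idPat A) Q) (idPat B)) = sumP (sumP (idPat (A + 1)) Q) (idPat B) := by
  rw [← sumP_assoc, ← sumP_assoc, ← idPat_one, sumP_id_id, Nat.add_comm 1 A]

lemma absorb_sumR (A B : ℕ) (Q : Pattern) :
    sumP (sumP (sumP (idPat A) Q) (idPat B)) onePat = sumP (sumP (idPat A) Q) (idPat (B + 1)) := by
  rw [sumP_assoc, ← idPat_one, sumP_id_id]

lemma absorb_skewL (A B : ℕ) (Q : Pattern) :
    skewP onePat (skewP (skewP (revPat A) Q) (revPat B)) =
      skewP (skewP (revPat (A + 1)) Q) (revPat B) := by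
  rw [← skewP_assoc, ← skewP_assoc, ← revPat_one, skewP_rev_rev, Nat.add_comm 1 A]

lemma absorb_skewR (A B : ℕ) (Q : Pattern) :
    skewP (skewP (skewP (revPat A) Q) (revPat B)) onePat =
      skewP (skewP (revPat A) Q) (revPat (B + 1)) := by
  rw [skewP_assoc, ← revPat_one, skewP_rev_rev]

lemma one_block_L (Q : Pattern) : sumP (sumP (idPat 1) Q) (idPat 0) = sumP onePat Q := by
  rw [sumP_id0_right, idPat_one]
lemma one_block_R (Q : Pattern) : sumP (sumP (idPat 0) Q) (idPat 1) = sumP Q onePat := by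
  rw [sumP_id0_left, idPat_one]
lemma one_block_NL (Q : Pattern) : skewP (skewP (revPat 1) Q) (revPat 0) = skewP onePat Q := by
  rw [skewP_rev0_right, revPat_one]
lemma one_block_NR (Q : Pattern) : skewP (skewP (revPat 0) Q) (revPat 1) = skewP Q onePat := by
  rw [skewP_rev0_left, revPat_one]

lemma valid_nil {m : ℤ} (hm : isML m) : ValidL (.word [] m) :=
  ⟨hm, by simp, List.isChain_singleton _⟩

lemma valid_cons {p : ℤ × ℤ} {v : List (ℤ × ℤ)} {m : ℤ}
    (hp : isAPlusL p ∨ isAMinusL p) (hv : ValidL (.word v m)) (hs : signA p ≠ fsign v m) :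
    ValidL (.word (p :: v) m) := by
  obtain ⟨hm, hl, hc⟩ := hv
  refine ⟨hm, ?_, ?_⟩
  · intro q hq
    rcases List.mem_cons.1 hq with rfl | hq
    · exact hp
    · exact hl q hq
  · simp only [List.map_cons, List.cons_append]
    cases v with
    | nil => exact List.isChain_pair.2 (by simpa [fsign] using hs)
    | cons r v' =>
      simp only [List.map_cons, List.cons_append] at hc ⊢
      exact List.isChain_cons_cons.2 ⟨by simpa [fsign] using hs, hc⟩

lemma valid_replace_head {p p' : ℤ × ℤ} {v : List (ℤ × ℤ)} {m : ℤ}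
    (h : ValidL (.word (p :: v) m)) (hp' : isAPlusL p' ∨ isAMinusL p')
    (hs : signA p' = signA p) : ValidL (.word (p' :: v) m) := by
  obtain ⟨hv, hsg⟩ := valid_tail h
  exact valid_cons hp' hv (by
    rw [hs]
    exact (valid_tail h).2)

lemma signA_pos {a b : ℤ} (ha : 0 ≤ a) (hb : 0 ≤ b) : signA (a, b) = true := by
  simp [signA, ha, hb]
lemma signA_neg {a b : ℤ} (h : ¬(0 ≤ a ∧ 0 ≤ b)) : signA (a, b) = false := by
  simp only [signA, decide_eq_false_iff_not]
  exact h

lemma fsign_nil (m : ℤ) : fsign [] m = signM m := rfl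
lemma fsign_cons (p : ℤ × ℤ) (v : List (ℤ × ℤ)) (m : ℤ) : fsign (p :: v) m = signA p := rfl

lemma step_sumL : ∀ (ws : List (ℤ × ℤ)) (m : ℤ), ValidL (.word ws m) →
    ∃ ws' m', ValidL (.word ws' m') ∧ PhiW ws' m' = sumP onePat (PhiW ws m) := by
  intro ws m hv
  have hm := hv.1
  have hm2 : 2 ≤ m.natAbs := isML_natAbs hm
  cases ws with
  | nil =>
    by_cases h : 0 < m
    · refine ⟨[], m + 1, valid_nil (by unfold isML at *; rw [abs_of_pos (by omega)]; omega), ?_⟩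
      rw [PhiW, PhiW, monoPat_pos h, monoPat_pos (by omega), sumP_one_id]
      congr 1
      omega
    · refine ⟨[(1, 0)], m, valid_cons (Or.inl ⟨by norm_num, by norm_num, by simp⟩)
        hv (by rw [signA_pos (by norm_num) (by norm_num), fsign_nil, signM]; simp; omega), ?_⟩
      rw [PhiW_cons_pos (by norm_num) (by norm_num)]
      norm_num
      rw [one_block_L]
  | cons p v =>
    obtain ⟨a, b⟩ := p
    rcases letter_cases (hv.2.1 _ (List.mem_cons_self)) with ⟨h1, h2, h3⟩ | ⟨hneg, h1, h2, h3⟩ <;>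
      dsimp only at *
    · refine ⟨(a + 1, b) :: v, m, valid_replace_head hv
        (Or.inl ⟨by omega, h2, by simp; omega⟩)
        (by rw [signA_pos (by omega) h2, signA_pos h1 h2]), ?_⟩
      rw [PhiW_cons_pos (by omega) h2, show ((a:ℤ) + 1).toNat = a.toNat + 1 from by omega,
        ← absorb_sumL, ← PhiW_cons_pos h1 h2]
    · refine ⟨(1, 0) :: (a, b) :: v, m, valid_cons (Or.inl ⟨by norm_num, by norm_num, by simp⟩)
        hv (by rw [signA_pos (by norm_num) (by norm_num), fsign_cons, signA_neg hneg]; simp), ?_⟩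
      rw [PhiW_cons_pos (by norm_num) (by norm_num)]
      norm_num
      rw [one_block_L]

lemma step_sumR : ∀ (ws : List (ℤ × ℤ)) (m : ℤ), ValidL (.word ws m) →
    ∃ ws' m', ValidL (.word ws' m') ∧ PhiW ws' m' = sumP (PhiW ws m) onePat := by
  intro ws m hv
  have hm := hv.1
  have hm2 : 2 ≤ m.natAbs := isML_natAbs hm
  cases ws with
  | nil =>
    by_cases h : 0 < m
    · refine ⟨[], m + 1, valid_nil (by unfold isML at *; rw [abs_of_pos (by omega)]; omega), ?_⟩
      rw [PhiW, PhiW, monoPat_pos h, monoPat_pos (by omega), sumP_id_one]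
      congr 1
      omega
    · refine ⟨[(0, 1)], m, valid_cons (Or.inl ⟨by norm_num, by norm_num, by simp⟩)
        hv (by rw [signA_pos (by norm_num) (by norm_num), fsign_nil, signM]; simp; omega), ?_⟩
      rw [PhiW_cons_pos (by norm_num) (by norm_num)]
      norm_num
      rw [one_block_R]
  | cons p v =>
    obtain ⟨a, b⟩ := p
    rcases letter_cases (hv.2.1 _ (List.mem_cons_self)) with ⟨h1, h2, h3⟩ | ⟨hneg, h1, h2, h3⟩ <;>
      dsimp only at *
    · refine ⟨(a, b + 1) :: v, m, valid_replace_head hv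
        (Or.inl ⟨h1, by omega, by simp; omega⟩)
        (by rw [signA_pos h1 (by omega), signA_pos h1 h2]), ?_⟩
      rw [PhiW_cons_pos h1 (by omega), show ((b:ℤ) + 1).toNat = b.toNat + 1 from by omega,
        ← absorb_sumR, ← PhiW_cons_pos h1 h2]
    · refine ⟨(0, 1) :: (a, b) :: v, m, valid_cons (Or.inl ⟨by norm_num, by norm_num, by simp⟩)
        hv (by rw [signA_pos (by norm_num) (by norm_num), fsign_cons, signA_neg hneg]; simp), ?_⟩
      rw [PhiW_cons_pos (by norm_num) (by norm_num)]
      norm_num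
      rw [one_block_R]

lemma step_skewL : ∀ (ws : List (ℤ × ℤ)) (m : ℤ), ValidL (.word ws m) →
    ∃ ws' m', ValidL (.word ws' m') ∧ PhiW ws' m' = skewP onePat (PhiW ws m) := by
  intro ws m hv
  have hm := hv.1
  have hm2 : 2 ≤ m.natAbs := isML_natAbs hm
  cases ws with
  | nil =>
    by_cases h : 0 < m
    · refine ⟨[(-1, 0)], m, valid_cons (Or.inr ⟨by norm_num, by norm_num, by simp⟩)
        hv (by rw [signA_neg (by norm_num), fsign_nil, signM]; simp; omega), ?_⟩
      rw [PhiW_cons_neg (by norm_num)]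
      norm_num
      rw [one_block_NL]
    · refine ⟨[], m - 1, valid_nil (by unfold isML at *; rw [abs_of_nonpos (by omega)]; omega), ?_⟩
      rw [PhiW, PhiW, monoPat_neg h, monoPat_neg (by omega), skewP_one_rev]
      congr 1
      omega
  | cons p v =>
    obtain ⟨a, b⟩ := p
    rcases letter_cases (hv.2.1 _ (List.mem_cons_self)) with ⟨h1, h2, h3⟩ | ⟨hneg, h1, h2, h3⟩ <;>
      dsimp only at *
    · refine ⟨(-1, 0) :: (a, b) :: v, m, valid_cons (Or.inr ⟨by norm_num, by norm_num, by simp⟩)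
        hv (by rw [signA_neg (by norm_num), fsign_cons, signA_pos h1 h2]; simp), ?_⟩
      rw [PhiW_cons_neg (by norm_num)]
      norm_num
      rw [one_block_NL]
    · refine ⟨(a - 1, b) :: v, m, valid_replace_head hv
        (Or.inr ⟨by omega, h2, by simp; omega⟩)
        (by rw [signA_neg (by omega), signA_neg hneg]), ?_⟩
      rw [PhiW_cons_neg (show ¬((0:ℤ) ≤ a - 1 ∧ (0:ℤ) ≤ b) from by omega),
        show (-((a:ℤ) - 1)).toNat = (-a).toNat + 1 from by omega,
        ← absorb_skewL, ← PhiW_cons_neg hneg]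

lemma step_skewR : ∀ (ws : List (ℤ × ℤ)) (m : ℤ), ValidL (.word ws m) →
    ∃ ws' m', ValidL (.word ws' m') ∧ PhiW ws' m' = skewP (PhiW ws m) onePat := by
  intro ws m hv
  have hm := hv.1
  have hm2 : 2 ≤ m.natAbs := isML_natAbs hm
  cases ws with
  | nil =>
    by_cases h : 0 < m
    · refine ⟨[(0, -1)], m, valid_cons (Or.inr ⟨by norm_num, by norm_num, by simp⟩)
        hv (by rw [signA_neg (by norm_num), fsign_nil, signM]; simp; omega), ?_⟩
      rw [PhiW_cons_neg (by norm_num)]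
      norm_num
      rw [one_block_NR]
    · refine ⟨[], m - 1, valid_nil (by unfold isML at *; rw [abs_of_nonpos (by omega)]; omega), ?_⟩
      rw [PhiW, PhiW, monoPat_neg h, monoPat_neg (by omega), skewP_rev_one]
      congr 1
      omega
  | cons p v =>
    obtain ⟨a, b⟩ := p
    rcases letter_cases (hv.2.1 _ (List.mem_cons_self)) with ⟨h1, h2, h3⟩ | ⟨hneg, h1, h2, h3⟩ <;>
      dsimp only at *
    · refine ⟨(0, -1) :: (a, b) :: v, m, valid_cons (Or.inr ⟨by norm_num, by norm_num, by simp⟩)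
        hv (by rw [signA_neg (by norm_num), fsign_cons, signA_pos h1 h2]; simp), ?_⟩
      rw [PhiW_cons_neg (by norm_num)]
      norm_num
      rw [one_block_NR]
    · refine ⟨(a, b - 1) :: v, m, valid_replace_head hv
        (Or.inr ⟨h1, by omega, by simp; omega⟩)
        (by rw [signA_neg (by omega), signA_neg hneg]), ?_⟩
      rw [PhiW_cons_neg (show ¬((0:ℤ) ≤ a ∧ (0:ℤ) ≤ b - 1) from by omega),
        show (-((b:ℤ) - 1)).toNat = (-b).toNat + 1 from by omega,
        ← absorb_skewR, ← PhiW_cons_neg hneg]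

lemma surjX : ∀ p : Pattern, InX p → ∃ w : LWord, ValidL w ∧ PhiL w = p := by
  intro p hp
  induction hp with
  | base => exact ⟨.one, trivial, rfl⟩
  | @sumL r _ ih =>
    obtain ⟨w, hw, rfl⟩ := ih
    cases w with
    | one =>
      refine ⟨.word [] 2, valid_nil (by norm_num [isML]), ?_⟩
      show PhiW [] 2 = _
      rw [PhiW, monoPat_pos (by norm_num)]
      show idPat 2 = _
      rw [show (2:ℕ) = 1 + 1 from rfl, ← sumP_id_id, idPat_one]
      rfl
    | word ws m =>
      obtain ⟨ws', m', h1, h2⟩ := step_sumL ws m hw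
      exact ⟨.word ws' m', h1, h2⟩
  | @skewL r _ ih =>
    obtain ⟨w, hw, rfl⟩ := ih
    cases w with
    | one =>
      refine ⟨.word [] (-2), valid_nil (by norm_num [isML]), ?_⟩
      show PhiW [] (-2) = _
      rw [PhiW, monoPat_neg (by norm_num)]
      show revPat 2 = _
      rw [show (2:ℕ) = 1 + 1 from rfl, ← skewP_rev_rev, revPat_one]
      rfl
    | word ws m =>
      obtain ⟨ws', m', h1, h2⟩ := step_skewL ws m hw
      exact ⟨.word ws' m', h1, h2⟩
  | @sumR r _ ih =>
    obtain ⟨w, hw, rfl⟩ := ih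
    cases w with
    | one =>
      refine ⟨.word [] 2, valid_nil (by norm_num [isML]), ?_⟩
      show PhiW [] 2 = _
      rw [PhiW, monoPat_pos (by norm_num)]
      show idPat 2 = _
      rw [show (2:ℕ) = 1 + 1 from rfl, ← sumP_id_id, idPat_one]
      rfl
    | word ws m =>
      obtain ⟨ws', m', h1, h2⟩ := step_sumR ws m hw
      exact ⟨.word ws' m', h1, h2⟩
  | @skewR r _ ih =>
    obtain ⟨w, hw, rfl⟩ := ih
    cases w with
    | one =>
      refine ⟨.word [] (-2), valid_nil (by norm_num [isML]), ?_⟩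
      show PhiW [] (-2) = _
      rw [PhiW, monoPat_neg (by norm_num)]
      show revPat 2 = _
      rw [show (2:ℕ) = 1 + 1 from rfl, ← skewP_rev_rev, revPat_one]
      rfl
    | word ws m =>
      obtain ⟨ws', m', h1, h2⟩ := step_skewR ws m hw
      exact ⟨.word ws' m', h1, h2⟩

end Dev
namespace Dev

lemma monoPat_inj {m m' : ℤ} (hm : 2 ≤ m.natAbs) (hm' : 2 ≤ m'.natAbs)
    (h : monoPat m = monoPat m') : m = m' := by
  have hfst : m.natAbs = m'.natAbs := by rw [← monoPat_fst, ← monoPat_fst, h]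
  by_cases h1 : 0 < m <;> by_cases h2 : 0 < m'
  · omega
  · exfalso
    rw [monoPat_pos h1, monoPat_neg h2] at h
    have hh := congrFun (congrArg emb h) 0
    rw [emb_idPat, emb_revPat, if_pos (by omega : 0 < (-m').toNat)] at hh
    omega
  · exfalso
    rw [monoPat_neg h1, monoPat_pos h2] at h
    have hh := congrFun (congrArg emb h) 0
    rw [emb_idPat, emb_revPat, if_pos (by omega : 0 < (-m).toNat)] at hh
    omega
  · omega

lemma posBlock_inj {A B A' B' : ℕ} {Q Q' : Pattern}
    (hq : 2 ≤ Q.1) (hq' : 2 ≤ Q'.1) (hQ : goodNeg Q) (hQ' : goodNeg Q')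
    (h : sumP (sumP (idPat A) Q) (idPat B) = sumP (sumP (idPat A') Q') (idPat B')) :
    A = A' ∧ B = B' ∧ Q = Q' := by
  have hfst : A + Q.1 + B = A' + Q'.1 + B' := congrArg Sigma.fst h
  have H : ∀ i, (if i < A then i else A + emb Q (i - A)) =
      (if i < A' then i else A' + emb Q' (i - A')) := by
    intro i
    have hh := congrFun (congrArg emb h) i
    rwa [emb_posBlock, emb_posBlock] at hh
  have hA : A = A' := by
    rcases lt_trichotomy A A' with hlt | e | hlt
    · exfalso
      have hh := H A
      rw [if_neg (lt_irrefl A), if_pos hlt, Nat.sub_self] at hh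
      exact hQ.2.1 (by omega)
    · exact e
    · exfalso
      have hh := H A'
      rw [if_pos hlt, if_neg (lt_irrefl A'), Nat.sub_self] at hh
      exact hQ'.2.1 (by omega)
  subst hA
  have hB : B = B' := by
    rcases lt_trichotomy B B' with hlt | e | hlt
    · exfalso
      have hqq : Q'.1 < Q.1 := by omega
      have hh := H (A + Q.1 - 1)
      rw [if_neg (by omega), if_neg (by omega), show A + Q.1 - 1 - A = Q.1 - 1 by omega,
        emb_ge (by omega : Q'.1 ≤ Q.1 - 1)] at hh
      exact hQ.2.2 (by omega)
    · exact e
    · exfalso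
      have hqq : Q.1 < Q'.1 := by omega
      have hh := H (A + Q'.1 - 1)
      rw [if_neg (by omega), if_neg (by omega), show A + Q'.1 - 1 - A = Q'.1 - 1 by omega,
        emb_ge (by omega : Q.1 ≤ Q'.1 - 1)] at hh
      exact hQ'.2.2 (by omega)
  subst hB
  have hq1 : Q.1 = Q'.1 := by omega
  refine ⟨rfl, rfl, pattern_ext hq1 ?_⟩
  intro i
  rcases Nat.lt_or_ge i Q.1 with hi | hi
  · have hh := H (A + i)
    rw [if_neg (by omega), if_neg (by omega), Nat.add_sub_cancel_left] at hh
    omega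
  · rw [emb_ge hi, emb_ge (by omega)]

lemma negBlock_inj {A B A' B' : ℕ} {Q Q' : Pattern}
    (hq : 2 ≤ Q.1) (hq' : 2 ≤ Q'.1) (hQ : goodPos Q) (hQ' : goodPos Q')
    (h : skewP (skewP (revPat A) Q) (revPat B) = skewP (skewP (revPat A') Q') (revPat B')) :
    A = A' ∧ B = B' ∧ Q = Q' := by
  have hfst : A + Q.1 + B = A' + Q'.1 + B' := congrArg Sigma.fst h
  have H : ∀ i, (if i < A then A + Q.1 + B - 1 - i
      else if i < A + Q.1 then B + emb Q (i - A)
      else if i < A + Q.1 + B then A + Q.1 + B - 1 - i else i) =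
      (if i < A' then A' + Q'.1 + B' - 1 - i
      else if i < A' + Q'.1 then B' + emb Q' (i - A')
      else if i < A' + Q'.1 + B' then A' + Q'.1 + B' - 1 - i else i) := by
    intro i
    have hh := congrFun (congrArg emb h) i
    rwa [emb_negBlock, emb_negBlock] at hh
  have hA : A = A' := by
    rcases lt_trichotomy A A' with hlt | e | hlt
    · exfalso
      have hh := H A
      rw [if_neg (lt_irrefl A), if_pos (by omega : A < A + Q.1), Nat.sub_self,
        if_pos hlt] at hh
      exact hQ.2.1 (by omega)
    · exact e
    · exfalso
      have hh := H A'
      rw [if_pos hlt, if_neg (lt_irrefl A'), if_pos (by omega : A' < A' + Q'.1),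
        Nat.sub_self] at hh
      exact hQ'.2.1 (by omega)
  subst hA
  have hB : B = B' := by
    rcases lt_trichotomy B B' with hlt | e | hlt
    · exfalso
      have hqq : Q'.1 < Q.1 := by omega
      have hh := H (A + Q.1 - 1)
      rw [if_neg (by omega), if_pos (by omega : A + Q.1 - 1 < A + Q.1),
        show A + Q.1 - 1 - A = Q.1 - 1 by omega,
        if_neg (by omega), if_neg (by omega : ¬ A + Q.1 - 1 < A + Q'.1),
        if_pos (by omega : A + Q.1 - 1 < A + Q'.1 + B')] at hh
      exact hQ.2.2 (by omega)
    · exact e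
    · exfalso
      have hqq : Q.1 < Q'.1 := by omega
      have hh := H (A + Q'.1 - 1)
      rw [if_neg (by omega), if_neg (by omega : ¬ A + Q'.1 - 1 < A + Q.1),
        if_pos (by omega : A + Q'.1 - 1 < A + Q.1 + B),
        if_neg (by omega), if_pos (by omega : A + Q'.1 - 1 < A + Q'.1),
        show A + Q'.1 - 1 - A = Q'.1 - 1 by omega] at hh
      exact hQ'.2.2 (by omega)
  subst hB
  have hq1 : Q.1 = Q'.1 := by omega
  refine ⟨rfl, rfl, pattern_ext hq1 ?_⟩
  intro i
  rcases Nat.lt_or_ge i Q.1 with hi | hi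
  · have hh := H (A + i)
    rw [if_neg (by omega : ¬ A + i < A), if_pos (by omega : A + i < A + Q.1),
      if_neg (by omega : ¬ A + i < A), if_pos (by omega : A + i < A + Q'.1),
      Nat.add_sub_cancel_left] at hh
    omega
  · rw [emb_ge hi, emb_ge (by omega)]

lemma mono_ne_posBlock {K A B : ℕ} {Q : Pattern} (hq : 2 ≤ Q.1) (hQ : goodNeg Q)
    (h : idPat K = sumP (sumP (idPat A) Q) (idPat B)) : False := by
  have hh := congrFun (congrArg emb h) A
  rw [emb_idPat, emb_posBlock, if_neg (lt_irrefl A), Nat.sub_self] at hh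
  exact hQ.2.1 (by omega)

lemma mono_ne_negBlock {K A B : ℕ} {Q : Pattern} (hq : 2 ≤ Q.1) (hQ : goodPos Q)
    (h : revPat K = skewP (skewP (revPat A) Q) (revPat B)) : False := by
  have hfst : K = A + Q.1 + B := congrArg Sigma.fst h
  have hh := congrFun (congrArg emb h) A
  rw [emb_revPat, if_pos (by omega : A < K), emb_negBlock, if_neg (lt_irrefl A),
    if_pos (by omega : A < A + Q.1), Nat.sub_self] at hh
  exact hQ.2.1 (by omega)

end Dev
namespace Dev

lemma fsign_congr {ws ws' : List (ℤ × ℤ)} {m m' : ℤ}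
    (hv : ValidL (.word ws m)) (hv' : ValidL (.word ws' m'))
    (h : PhiW ws m = PhiW ws' m') : fsign ws m = fsign ws' m' := by
  obtain ⟨-, hp, hn⟩ := INV ws m hv
  obtain ⟨-, hp', hn'⟩ := INV ws' m' hv'
  cases hs : fsign ws m <;> cases hs' : fsign ws' m'
  · rfl
  · exact (not_goodPos_goodNeg (hp' hs') (h ▸ hn hs)).elim
  · exact (not_goodPos_goodNeg (hp hs) (h ▸ hn' hs')).elim
  · rfl

lemma fsign_tail_false {p : ℤ × ℤ} {v : List (ℤ × ℤ)} {m : ℤ}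
    (h : signA p ≠ fsign v m) (hs : signA p = true) : fsign v m = false := by
  cases hb : fsign v m
  · rfl
  · exact absurd (hs.trans hb.symm) h

lemma fsign_tail_true {p : ℤ × ℤ} {v : List (ℤ × ℤ)} {m : ℤ}
    (h : signA p ≠ fsign v m) (hs : signA p = false) : fsign v m = true := by
  cases hb : fsign v m
  · exact absurd (hs.trans hb.symm) h
  · rfl

lemma nil_cons_absurd {m m' : ℤ} {p : ℤ × ℤ} {v : List (ℤ × ℤ)}
    (hv : ValidL (.word [] m)) (hv' : ValidL (.word (p :: v) m'))
    (h : PhiW [] m = PhiW (p :: v) m') : False := by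
  have hfs := fsign_congr hv hv' h
  obtain ⟨a, b⟩ := p
  obtain ⟨hvt, hst⟩ := valid_tail hv'
  have hq2 : 2 ≤ (PhiW v m').1 := PhiW_fst_ge hvt
  obtain ⟨-, hgp, hgn⟩ := INV v m' hvt
  rcases letter_cases (hv'.2.1 _ (List.mem_cons_self)) with ⟨h1, h2, h3⟩ | ⟨hneg, h1, h2, h3⟩ <;>
    dsimp only at *
  · -- positive letter, so m > 0
    have hsA : signA (a, b) = true := signA_pos h1 h2
    have hm : 0 < m := by
      rw [fsign_nil, fsign_cons, hsA, signM] at hfs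
      simpa using hfs
    rw [PhiW, monoPat_pos hm, PhiW_cons_pos h1 h2] at h
    exact mono_ne_posBlock hq2 (hgn (fsign_tail_false hst hsA)) h
  · have hsA : signA (a, b) = false := signA_neg hneg
    have hm : ¬ 0 < m := by
      rw [fsign_nil, fsign_cons, hsA, signM] at hfs
      simpa using hfs
    rw [PhiW, monoPat_neg hm, PhiW_cons_neg hneg] at h
    exact mono_ne_negBlock hq2 (hgp (fsign_tail_true hst hsA)) h

lemma injW : ∀ (ws ws' : List (ℤ × ℤ)) (m m' : ℤ),
    ValidL (.word ws m) → ValidL (.word ws' m') → PhiW ws m = PhiW ws' m' →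
    ws = ws' ∧ m = m' := by
  intro ws
  induction ws with
  | nil =>
    intro ws' m m' hv hv' h
    cases ws' with
    | nil => exact ⟨rfl, monoPat_inj (isML_natAbs hv.1) (isML_natAbs hv'.1) h⟩
    | cons p v => exact (nil_cons_absurd hv hv' h).elim
  | cons p v ih =>
    intro ws' m m' hv hv' h
    cases ws' with
    | nil => exact (nil_cons_absurd hv' hv h.symm).elim
    | cons p' v' =>
      have hfs := fsign_congr hv hv' h
      rw [fsign_cons, fsign_cons] at hfs
      obtain ⟨a, b⟩ := p
      obtain ⟨a', b'⟩ := p'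
      obtain ⟨hvt, hst⟩ := valid_tail hv
      obtain ⟨hvt', hst'⟩ := valid_tail hv'
      have hq2 : 2 ≤ (PhiW v m).1 := PhiW_fst_ge hvt
      have hq2' : 2 ≤ (PhiW v' m').1 := PhiW_fst_ge hvt'
      obtain ⟨-, hgp, hgn⟩ := INV v m hvt
      obtain ⟨-, hgp', hgn'⟩ := INV v' m' hvt'
      rcases letter_cases (hv.2.1 _ (List.mem_cons_self)) with
        ⟨h1, h2, h3⟩ | ⟨hneg, h1, h2, h3⟩ <;>
      rcases letter_cases (hv'.2.1 _ (List.mem_cons_self)) with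
        ⟨h1', h2', h3'⟩ | ⟨hneg', h1', h2', h3'⟩ <;>
        dsimp only at *
      · -- pos pos
        rw [PhiW_cons_pos h1 h2, PhiW_cons_pos h1' h2'] at h
        obtain ⟨eA, eB, eQ⟩ := posBlock_inj hq2 hq2'
          (hgn (fsign_tail_false hst (signA_pos h1 h2)))
          (hgn' (fsign_tail_false hst' (signA_pos h1' h2'))) h
        obtain ⟨ev, em⟩ := ih v' m m' hvt hvt' eQ
        refine ⟨?_, em⟩
        rw [ev]
        congr 2 <;> omega
      · -- pos neg : signs clash
        rw [signA_pos h1 h2, signA_neg hneg'] at hfs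
        exact absurd hfs (by simp)
      · rw [signA_neg hneg, signA_pos h1' h2'] at hfs
        exact absurd hfs (by simp)
      · -- neg neg
        rw [PhiW_cons_neg hneg, PhiW_cons_neg hneg'] at h
        obtain ⟨eA, eB, eQ⟩ := negBlock_inj hq2 hq2'
          (hgp (fsign_tail_true hst (signA_neg hneg)))
          (hgp' (fsign_tail_true hst' (signA_neg hneg'))) h
        obtain ⟨ev, em⟩ := ih v' m m' hvt hvt' eQ
        refine ⟨?_, em⟩
        rw [ev]
        congr 2 <;> omega

end Dev

/-- Φ is a size-preserving bijection from L onto X. -/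
theorem PhiL_size_preserving_bijection :
    (∀ w : LWord, ValidL w → (PhiL w).1 = sizeL w ∧ InX (PhiL w)) ∧
    (∀ w w' : LWord, ValidL w → ValidL w' → PhiL w = PhiL w' → w = w') ∧
    (∀ p : Pattern, InX p → ∃ w : LWord, ValidL w ∧ PhiL w = p) := by
  refine ⟨?_, ?_, Dev.surjX⟩
  · intro w hw
    cases w with
    | one => exact ⟨rfl, InX.base⟩
    | word ws m =>
      obtain ⟨hm, hl, -⟩ := hw
      exact ⟨Dev.PhiW_fst ws m hl,
        Dev.InX_PhiW ws m (by have := Dev.isML_natAbs hm; omega) hl⟩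
  · intro w w' hv hv' h
    cases w with
    | one =>
      cases w' with
      | one => rfl
      | word ws' m' =>
        exfalso
        have h2 := Dev.PhiW_fst_ge hv'
        have h1 : (PhiL LWord.one).1 = 1 := rfl
        rw [h] at h1
        change 2 ≤ (PhiL (LWord.word ws' m')).1 at h2
        omega
    | word ws m =>
      cases w' with
      | one =>
        exfalso
        have h2 := Dev.PhiW_fst_ge hv
        have h1 : (PhiL LWord.one).1 = 1 := rfl
        rw [← h] at h1
        change 2 ≤ (PhiL (LWord.word ws m)).1 at h2
        omega
      | word ws' m' =>
        obtain ⟨e1, e2⟩ := Dev.injW ws ws' m m' hv hv' h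
        rw [e1, e2]
end

section
/- For a word w = (a,b)v in the language L (with (a,b) ∈ A⁺) and any t ∈ L: Φ(w) ≤ Φ(t) if and only if the (a,b)-prefix of t is defined and Φ(v) ≤ Φ(s), where s is the (a,b)-remainder of t. -/
open Equiv Filter

/-- The list of A-letters of a word. -/
def aLetters : LWord → List (ℤ × ℤ)
  | .one => []
  | .word ws _ => ws

/-- Remove the first k A-letters of a word. -/
def dropA : LWord → ℕ → LWord
  | .one, _ => .one
  | .word ws m, k => .word (ws.drop k) m

/-- The positive content of a list of A-letters: the coordinatewise sum of its
positive letters. -/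
def posContent (ws : List (ℤ × ℤ)) : ℤ × ℤ := (ws.filter signA).sum

/-- Coordinatewise comparison of contents. -/
def contentGE (p q : ℤ × ℤ) : Prop := q.1 ≤ p.1 ∧ q.2 ≤ p.2

/-! ### Auxiliary machinery -/

lemma sumPerm_val_lt' {m n : ℕ} (α : Equiv.Perm (Fin m)) (β : Equiv.Perm (Fin n))
    {i : ℕ} (hi : i < m + n) (h : i < m) :
    ((sumPerm α β) ⟨i, hi⟩ : ℕ) = (α ⟨i, h⟩ : ℕ) := by
  have e : (⟨i, hi⟩ : Fin (m+n)) = Fin.castAdd n ⟨i, h⟩ := by ext; simp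
  rw [e]
  simp only [sumPerm, Equiv.trans_apply, finSumFinEquiv_symm_apply_castAdd,
    Equiv.sumCongr_apply, Sum.map_inl, finSumFinEquiv_apply_left, Fin.coe_castAdd]

lemma sumPerm_val_ge' {m n : ℕ} (α : Equiv.Perm (Fin m)) (β : Equiv.Perm (Fin n))
    {i : ℕ} (hi : i < m + n) (h : m ≤ i) :
    ((sumPerm α β) ⟨i, hi⟩ : ℕ) = m + (β ⟨i - m, by omega⟩ : ℕ) := by
  have e : (⟨i, hi⟩ : Fin (m+n)) = Fin.natAdd m ⟨i - m, by omega⟩ := by ext; simp; omega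
  rw [e]
  simp only [sumPerm, Equiv.trans_apply, finSumFinEquiv_symm_apply_natAdd,
    Equiv.sumCongr_apply, Sum.map_inr, finSumFinEquiv_apply_right, Fin.coe_natAdd]

lemma skewPerm_val_lt' {m n : ℕ} (α : Equiv.Perm (Fin m)) (β : Equiv.Perm (Fin n))
    {i : ℕ} (hi : i < m + n) (h : i < m) :
    ((skewPerm α β) ⟨i, hi⟩ : ℕ) = n + (α ⟨i, h⟩ : ℕ) := by
  have e : (⟨i, hi⟩ : Fin (m+n)) = Fin.castAdd n ⟨i, h⟩ := by ext; simp
  rw [e]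
  simp only [skewPerm, Equiv.trans_apply, finSumFinEquiv_symm_apply_castAdd,
    Equiv.sumCongr_apply, Sum.map_inl, Equiv.sumComm_apply, Sum.swap_inl,
    finSumFinEquiv_apply_right, finCongr_apply, Fin.coe_cast, Fin.coe_natAdd]

lemma skewPerm_val_ge' {m n : ℕ} (α : Equiv.Perm (Fin m)) (β : Equiv.Perm (Fin n))
    {i : ℕ} (hi : i < m + n) (h : m ≤ i) :
    ((skewPerm α β) ⟨i, hi⟩ : ℕ) = (β ⟨i - m, by omega⟩ : ℕ) := by
  have e : (⟨i, hi⟩ : Fin (m+n)) = Fin.natAdd m ⟨i - m, by omega⟩ := by ext; simp; omega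
  rw [e]
  simp only [skewPerm, Equiv.trans_apply, finSumFinEquiv_symm_apply_natAdd,
    Equiv.sumCongr_apply, Sum.map_inr, Equiv.sumComm_apply, Sum.swap_inr,
    finSumFinEquiv_apply_left, finCongr_apply, Fin.coe_cast, Fin.coe_castAdd]

/-- ℕ-valued view of the values of a pattern (junk value `0` out of range). -/
def pvN (p : Pattern) (i : ℕ) : ℕ := if h : i < p.1 then (p.2 ⟨i, h⟩ : ℕ) else 0

lemma pvN_lt {p : Pattern} {i : ℕ} (h : i < p.1) : pvN p i < p.1 := by
  rw [pvN, dif_pos h]; exact (p.2 ⟨i, h⟩).2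

lemma pvN_inj {p : Pattern} {i j : ℕ} (hi : i < p.1) (hj : j < p.1)
    (h : pvN p i = pvN p j) : i = j := by
  rw [pvN, dif_pos hi, pvN, dif_pos hj] at h
  have := p.2.injective (Fin.ext h)
  exact congrArg Fin.val this

/-- Triple sum `c ⊕ p ⊕ d`. -/
def TS (c : ℕ) (p : Pattern) (d : ℕ) : Pattern := sumP (sumP (idPat c) p) (idPat d)
/-- Triple skew `c ⊖ p ⊖ d`. -/
def TK (c : ℕ) (p : Pattern) (d : ℕ) : Pattern := skewP (skewP (revPat c) p) (revPat d)

lemma TS_fst (c : ℕ) (p : Pattern) (d : ℕ) : (TS c p d).1 = c + p.1 + d := rfl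
lemma TK_fst (c : ℕ) (p : Pattern) (d : ℕ) : (TK c p d).1 = c + p.1 + d := rfl

lemma pvN_TS_lo {c d : ℕ} {p : Pattern} {i : ℕ} (h : i < c) :
    pvN (TS c p d) i = i := by
  have hi : i < (TS c p d).1 := by rw [TS_fst]; omega
  rw [pvN, dif_pos hi]
  show ((sumPerm (sumPerm (1 : Equiv.Perm (Fin c)) p.2) (1 : Equiv.Perm (Fin d)))
      ⟨i, by omega⟩ : ℕ) = i
  rw [sumPerm_val_lt' _ _ (by omega) (show i < c + p.1 by omega)]
  rw [sumPerm_val_lt' _ _ (show i < c + p.1 by omega) h]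
  simp

lemma pvN_TS_mid {c d : ℕ} {p : Pattern} {y : ℕ} (hy : y < p.1) :
    pvN (TS c p d) (c + y) = c + pvN p y := by
  have hi : c + y < (TS c p d).1 := by rw [TS_fst]; omega
  rw [pvN, dif_pos hi]
  show ((sumPerm (sumPerm (1 : Equiv.Perm (Fin c)) p.2) (1 : Equiv.Perm (Fin d)))
      ⟨c + y, by omega⟩ : ℕ) = c + pvN p y
  rw [sumPerm_val_lt' _ _ (by omega) (show c + y < c + p.1 by omega)]
  rw [sumPerm_val_ge' _ _ (show c + y < c + p.1 by omega) (show c ≤ c + y by omega)]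
  rw [pvN, dif_pos hy]
  simp only [Nat.add_sub_cancel_left]

lemma pvN_TS_hi {c d : ℕ} {p : Pattern} {i : ℕ} (h1 : c + p.1 ≤ i) (h2 : i < c + p.1 + d) :
    pvN (TS c p d) i = i := by
  have hi : i < (TS c p d).1 := by rw [TS_fst]; omega
  rw [pvN, dif_pos hi]
  show ((sumPerm (sumPerm (1 : Equiv.Perm (Fin c)) p.2) (1 : Equiv.Perm (Fin d)))
      ⟨i, by omega⟩ : ℕ) = i
  rw [sumPerm_val_ge' _ _ (by omega) h1]
  simp
  omega

lemma pvN_TS_mid' {c d : ℕ} {p : Pattern} {i : ℕ} (h1 : c ≤ i) (h2 : i < c + p.1) :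
    pvN (TS c p d) i = c + pvN p (i - c) := by
  have h := pvN_TS_mid (c := c) (d := d) (p := p) (y := i - c) (by omega)
  rw [show c + (i - c) = i from by omega] at h
  exact h

lemma pvN_TK_lo {c d : ℕ} {p : Pattern} {i : ℕ} (h : i < c) :
    pvN (TK c p d) i = d + (p.1 + (c - 1 - i)) := by
  have hi : i < (TK c p d).1 := by rw [TK_fst]; omega
  rw [pvN, dif_pos hi]
  show ((skewPerm (skewPerm (Fin.revPerm : Equiv.Perm (Fin c)) p.2) (Fin.revPerm : Equiv.Perm (Fin d)))
      ⟨i, by omega⟩ : ℕ) = d + (p.1 + (c - 1 - i))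
  rw [skewPerm_val_lt' _ _ (by omega) (show i < c + p.1 by omega)]
  rw [skewPerm_val_lt' _ _ (show i < c + p.1 by omega) h]
  simp [Fin.val_rev]
  omega

lemma pvN_TK_mid {c d : ℕ} {p : Pattern} {y : ℕ} (hy : y < p.1) :
    pvN (TK c p d) (c + y) = d + pvN p y := by
  have hi : c + y < (TK c p d).1 := by rw [TK_fst]; omega
  rw [pvN, dif_pos hi]
  show ((skewPerm (skewPerm (Fin.revPerm : Equiv.Perm (Fin c)) p.2) (Fin.revPerm : Equiv.Perm (Fin d)))
      ⟨c + y, by omega⟩ : ℕ) = d + pvN p y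
  rw [skewPerm_val_lt' _ _ (by omega) (show c + y < c + p.1 by omega)]
  rw [skewPerm_val_ge' _ _ (show c + y < c + p.1 by omega) (show c ≤ c + y by omega)]
  rw [pvN, dif_pos hy]
  simp only [Nat.add_sub_cancel_left]

lemma pvN_TK_mid' {c d : ℕ} {p : Pattern} {i : ℕ} (h1 : c ≤ i) (h2 : i < c + p.1) :
    pvN (TK c p d) i = d + pvN p (i - c) := by
  have h := pvN_TK_mid (c := c) (d := d) (p := p) (y := i - c) (by omega)
  rw [show c + (i - c) = i from by omega] at h
  exact h

lemma pvN_TK_hi {c d : ℕ} {p : Pattern} {i : ℕ} (h1 : c + p.1 ≤ i) (h2 : i < c + p.1 + d) :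
    pvN (TK c p d) i = c + p.1 + d - 1 - i := by
  have hi : i < (TK c p d).1 := by rw [TK_fst]; omega
  rw [pvN, dif_pos hi]
  show ((skewPerm (skewPerm (Fin.revPerm : Equiv.Perm (Fin c)) p.2) (Fin.revPerm : Equiv.Perm (Fin d)))
      ⟨i, by omega⟩ : ℕ) = c + p.1 + d - 1 - i
  rw [skewPerm_val_ge' _ _ (by omega) h1]
  simp [Fin.val_rev]
  omega

lemma pvN_id {j i : ℕ} (h : i < j) : pvN (idPat j) i = i := by
  rw [pvN]
  have : i < (idPat j).1 := h
  rw [dif_pos this]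
  simp [idPat]
  rfl

lemma pvN_rev {j i : ℕ} (h : i < j) : pvN (revPat j) i = j - 1 - i := by
  rw [pvN]
  have : i < (revPat j).1 := h
  rw [dif_pos this]
  simp [revPat, Fin.val_rev]
  show j - (i + 1) = _
  omega

/-- `Contains` in terms of ℕ-valued data. -/
lemma contains_iff (p q : Pattern) :
    Contains p q ↔ ∃ f : ℕ → ℕ,
      (∀ i, i < p.1 → f i < q.1) ∧
      (∀ i j, i < j → j < p.1 → f i < f j) ∧
      (∀ s t, s < p.1 → t < p.1 → (pvN p s < pvN p t ↔ pvN q (f s) < pvN q (f t))) := by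
  constructor
  · rintro ⟨F, hmono, hiff⟩
    refine ⟨fun i => if h : i < p.1 then (F ⟨i, h⟩ : ℕ) else 0, ?_, ?_, ?_⟩
    · intro i hi; dsimp only; rw [dif_pos hi]; exact (F ⟨i, hi⟩).2
    · intro i j hij hj
      have hi : i < p.1 := lt_trans hij hj
      dsimp only; rw [dif_pos hi, dif_pos hj]
      exact hmono hij
    · intro s t hs ht
      dsimp only; rw [dif_pos hs, dif_pos ht]
      have h := hiff ⟨s, hs⟩ ⟨t, ht⟩
      rw [pvN, dif_pos hs, pvN, dif_pos ht, pvN, dif_pos (F ⟨s, hs⟩).2,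
        pvN, dif_pos (F ⟨t, ht⟩).2]
      simpa only [Fin.lt_def, Fin.eta] using h
  · rintro ⟨f, hb, hm, hiff⟩
    refine ⟨fun i => ⟨f i, hb i i.2⟩, ?_, ?_⟩
    · intro i j hij; exact hm i j hij j.2
    · intro s t
      have h := hiff s t s.2 t.2
      rw [pvN, dif_pos s.2, pvN, dif_pos t.2, pvN, dif_pos (hb s s.2),
        pvN, dif_pos (hb t t.2)] at h
      simpa only [Fin.lt_def, Fin.eta] using h

/-- Cross-block comparisons in a triple sum are forced. -/
lemma ts_cross {c d : ℕ} {p : Pattern} {i j : ℕ} (hij : i < j) (hj : j < c + p.1 + d)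
    (hno : ¬ (c ≤ i ∧ j < c + p.1)) : pvN (TS c p d) i < pvN (TS c p d) j := by
  by_cases hi1 : i < c
  · rw [pvN_TS_lo hi1]
    by_cases hj1 : j < c
    · rw [pvN_TS_lo hj1]; omega
    · by_cases hj2 : j < c + p.1
      · rw [pvN_TS_mid' (by omega) hj2]; omega
      · rw [pvN_TS_hi (by omega) hj]; omega
  · have hj3 : c + p.1 ≤ j := by omega
    rw [pvN_TS_hi hj3 hj]
    by_cases hi2 : i < c + p.1
    · have := pvN_lt (p := p) (i := i - c) (by omega)
      rw [pvN_TS_mid' (by omega) hi2]; omega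
    · rw [pvN_TS_hi (by omega) (by omega)]; omega

/-- Cross-block comparisons in a triple skew are forced (reversed). -/
lemma tk_cross {c d : ℕ} {p : Pattern} {i j : ℕ} (hij : i < j) (hj : j < c + p.1 + d)
    (hno : ¬ (c ≤ i ∧ j < c + p.1)) : pvN (TK c p d) j < pvN (TK c p d) i := by
  by_cases hi1 : i < c
  · rw [pvN_TK_lo hi1]
    by_cases hj1 : j < c
    · rw [pvN_TK_lo hj1]; omega
    · by_cases hj2 : j < c + p.1
      · have := pvN_lt (p := p) (i := j - c) (by omega)
        rw [pvN_TK_mid' (by omega) hj2]; omega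
      · rw [pvN_TK_hi (by omega) hj]; omega
  · have hj3 : c + p.1 ≤ j := by omega
    rw [pvN_TK_hi hj3 hj]
    by_cases hi2 : i < c + p.1
    · rw [pvN_TK_mid' (by omega) hi2]; omega
    · rw [pvN_TK_hi (by omega) (by omega)]; omega

/-- No element of `p` is simultaneously above everything to its left and below
everything to its right (no singleton sum component). -/
def NoSumSing (p : Pattern) : Prop :=
  ∀ x, x < p.1 → (∃ y, y < x ∧ pvN p x < pvN p y) ∨
    (∃ y, x < y ∧ y < p.1 ∧ pvN p y < pvN p x)

lemma sing_contra {p : Pattern} (hS : NoSumSing p) {x : ℕ} (hx : x < p.1)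
    (hlo : ∀ y, y < x → pvN p y < pvN p x)
    (hhi : ∀ y, x < y → y < p.1 → pvN p x < pvN p y) : False := by
  rcases hS x hx with ⟨y, h1, h2⟩ | ⟨y, h1, h2, h3⟩
  · have := hlo y h1; omega
  · have := hhi y h1 h2; omega

lemma noSumSing_rev {j : ℕ} (hj : 2 ≤ j) : NoSumSing (revPat j) := by
  intro x hx
  have hx' : x < j := hx
  by_cases h : x + 1 < j
  · right
    exact ⟨x + 1, by omega, h, by rw [pvN_rev h, pvN_rev hx']; omega⟩
  · left
    exact ⟨0, by omega, by rw [pvN_rev hx', pvN_rev (show 0 < j by omega)]; omega⟩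

lemma noSumSing_TK {c d : ℕ} {p : Pattern} (hcd : 0 < c + d) (hp : 1 ≤ p.1) :
    NoSumSing (TK c p d) := by
  have hN : (TK c p d).1 = c + p.1 + d := TK_fst ..
  by_cases hc : 0 < c
  · -- position 0 carries the global maximum
    have h0 : pvN (TK c p d) 0 = d + (p.1 + (c - 1 - 0)) := pvN_TK_lo hc
    have hmax : ∀ z, z < c + p.1 + d → z ≠ 0 → pvN (TK c p d) z < pvN (TK c p d) 0 := by
      intro z hz hz0
      rw [h0]
      by_cases h1 : z < c
      · rw [pvN_TK_lo h1]
        omega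
      · by_cases h2 : z < c + p.1
        · have := pvN_lt (p := p) (i := z - c) (by omega)
          rw [pvN_TK_mid' (by omega) h2]; omega
        · rw [pvN_TK_hi (by omega) hz]; omega
    intro x hxN
    have hx : x < c + p.1 + d := by omega
    by_cases hx0 : x = 0
    · subst hx0
      right
      refine ⟨1, by omega, by rw [hN]; omega, hmax 1 (by omega) (by omega)⟩
    · left
      exact ⟨0, by omega, hmax x hx hx0⟩
  · -- c = 0, d > 0 : the last position carries the global minimum
    have hc0 : c = 0 := by omega
    have hd : 0 < d := by omega
    set L := c + p.1 + d - 1 with hL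
    have hLv : pvN (TK c p d) L = 0 := by
      rw [pvN_TK_hi (by omega) (by omega)]; omega
    have hmin : ∀ z, z < c + p.1 + d → z ≠ L → pvN (TK c p d) L < pvN (TK c p d) z := by
      intro z hz hzL
      rw [hLv]
      by_cases h1 : z < c
      · omega
      · by_cases h2 : z < c + p.1
        · rw [pvN_TK_mid' (by omega) h2]; omega
        · rw [pvN_TK_hi (by omega) hz]; omega
    intro x hxN
    have hx : x < c + p.1 + d := by omega
    by_cases hxL : x = L
    · subst hxL
      left
      exact ⟨0, by omega, hmin 0 (by omega) (by omega)⟩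
    · right
      exact ⟨L, by omega, by omega, hmin x hx hxL⟩

lemma noSumSing_descent {p : Pattern} (hS : NoSumSing p) (hp : 1 ≤ p.1) :
    ∃ s t, s < t ∧ t < p.1 ∧ pvN p t < pvN p s := by
  rcases hS 0 (by omega) with ⟨y, h1, _⟩ | ⟨y, h1, h2, h3⟩
  · omega
  · exact ⟨0, y, h1, h2, h3⟩

lemma ts_ascent {a b : ℕ} {p : Pattern} (hab : 0 < a + b) (hp : 1 ≤ p.1) :
    ∃ s t, s < t ∧ t < a + p.1 + b ∧ pvN (TS a p b) s < pvN (TS a p b) t := by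
  by_cases ha : 0 < a
  · exact ⟨0, a, by omega, by omega, ts_cross (by omega) (by omega) (by omega)⟩
  · exact ⟨a, a + p.1, by omega, by omega, ts_cross (by omega) (by omega) (by omega)⟩

lemma no_contains_id {p : Pattern} (hS : NoSumSing p) (hp : 1 ≤ p.1) (a b j : ℕ) :
    ¬ Contains (TS a p b) (idPat j) := by
  rw [contains_iff]
  rintro ⟨f, hfb, hfm, hiff⟩
  simp only [TS_fst] at hfb hfm hiff
  have hfb' : ∀ i, i < a + p.1 + b → f i < j := hfb
  obtain ⟨s, t, hst, ht, hd⟩ := noSumSing_descent hS hp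
  have hb1 : a + s < a + p.1 + b := by omega
  have hb2 : a + t < a + p.1 + b := by omega
  have h1 : f (a + s) < f (a + t) := hfm _ _ (by omega) (by omega)
  have h2 := (hiff (a + s) (a + t) hb1 hb2).mpr
  rw [pvN_TS_mid (by omega), pvN_TS_mid ht, pvN_id (hfb' _ hb1), pvN_id (hfb' _ hb2)] at h2
  have := h2 h1
  omega

lemma no_contains_rev {p : Pattern} (hp : 1 ≤ p.1) {a b : ℕ} (hab : 0 < a + b) (j : ℕ) :
    ¬ Contains (TS a p b) (revPat j) := by
  rw [contains_iff]
  rintro ⟨f, hfb, hfm, hiff⟩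
  simp only [TS_fst] at hfb hfm hiff
  have hfb' : ∀ i, i < a + p.1 + b → f i < j := hfb
  obtain ⟨s, t, hst, ht, ha⟩ := ts_ascent hab hp
  have h1 : f s < f t := hfm _ _ hst ht
  have h2 := (hiff s t (by omega) ht).mp ha
  rw [pvN_rev (hfb' _ (by omega)), pvN_rev (hfb' _ ht)] at h2
  have hbt := hfb' t ht
  omega

lemma TS_shift {p : Pattern} {a b a' b' : ℕ} (ha : a' ≤ a) (hb : b' ≤ b) {s : ℕ}
    (hs : s < a' + p.1 + b') :
    pvN (TS a p b) (s + (a - a')) = pvN (TS a' p b') s + (a - a') := by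
  by_cases h1 : s < a'
  · rw [pvN_TS_lo (show s + (a - a') < a by omega), pvN_TS_lo h1]
  · by_cases h2 : s < a' + p.1
    · rw [pvN_TS_mid' (by omega) (show s + (a - a') < a + p.1 by omega),
        pvN_TS_mid' (by omega) h2]
      rw [show s + (a - a') - a = s - a' from by omega]
      omega
    · rw [pvN_TS_hi (by omega) (by omega), pvN_TS_hi (by omega) (by omega)]

lemma pos_step (p : Pattern) (hp : 1 ≤ p.1) (hS : NoSumSing p)
    (a b c d : ℕ) (q : Pattern) :
    Contains (TS a p b) (TS c q d) ↔ Contains (TS (a - c) p (b - d)) q := by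
  rw [contains_iff, contains_iff]
  simp only [TS_fst]
  constructor
  · rintro ⟨f, hfb, hfm, hiff⟩
    have hub0 : ∀ dlt i, i + dlt < a + p.1 + b → f i + dlt ≤ f (i + dlt) := by
      intro dlt
      induction dlt with
      | zero => intro i _; simp
      | succ e ih =>
        intro i h
        have h1 := ih i (by omega)
        have h2 := hfm (i + e) (i + e + 1) (by omega) (by omega)
        have h3 : i + (e + 1) = i + e + 1 := rfl
        rw [h3]
        omega
    have hub : ∀ i j, i ≤ j → j < a + p.1 + b → f i + (j - i) ≤ f j := by
      intro i j hij hj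
      have := hub0 (j - i) i (by omega)
      rw [show i + (j - i) = j from by omega] at this
      omega
    have hge : ∀ i, i < a + p.1 + b → i ≤ f i := by
      intro i hi
      have := hub 0 i (by omega) hi
      omega
    have hmid : ∀ y, y < p.1 → c ≤ f (a + y) ∧ f (a + y) < c + q.1 := by
      intro y hy
      constructor
      · by_contra hc
        push_neg at hc
        refine sing_contra hS hy ?_ ?_
        · intro z hz
          have h1 : f (a + z) < f (a + y) := hfm _ _ (by omega) (by omega)
          have h2 : pvN (TS c q d) (f (a + z)) < pvN (TS c q d) (f (a + y)) := by
            rw [pvN_TS_lo (by omega), pvN_TS_lo (by omega)]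
            exact h1
          have h3 := (hiff (a + z) (a + y) (by omega) (by omega)).mpr h2
          rw [pvN_TS_mid (by omega), pvN_TS_mid hy] at h3
          omega
        · intro z hyz hz
          have h1 : f (a + y) < f (a + z) := hfm _ _ (by omega) (by omega)
          have h2 : pvN (TS c q d) (f (a + y)) < pvN (TS c q d) (f (a + z)) :=
            ts_cross h1 (hfb _ (by omega)) (by omega)
          have h3 := (hiff (a + y) (a + z) (by omega) (by omega)).mpr h2
          rw [pvN_TS_mid hy, pvN_TS_mid hz] at h3
          omega
      · by_contra hc
        push_neg at hc
        refine sing_contra hS hy ?_ ?_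
        · intro z hz
          have h1 : f (a + z) < f (a + y) := hfm _ _ (by omega) (by omega)
          have h2 : pvN (TS c q d) (f (a + z)) < pvN (TS c q d) (f (a + y)) :=
            ts_cross h1 (hfb _ (by omega)) (by omega)
          have h3 := (hiff (a + z) (a + y) (by omega) (by omega)).mpr h2
          rw [pvN_TS_mid (by omega), pvN_TS_mid hy] at h3
          omega
        · intro z hyz hz
          have h1 : f (a + y) < f (a + z) := hfm _ _ (by omega) (by omega)
          have h2 : pvN (TS c q d) (f (a + y)) < pvN (TS c q d) (f (a + z)) :=
            ts_cross h1 (hfb _ (by omega)) (by omega)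
          have h3 := (hiff (a + y) (a + z) (by omega) (by omega)).mpr h2
          rw [pvN_TS_mid hy, pvN_TS_mid hz] at h3
          omega
    have himg : ∀ i, i < (a - c) + p.1 + (b - d) →
        c ≤ f (i + (a - (a - c))) ∧ f (i + (a - (a - c))) < c + q.1 := by
      intro i hi
      by_cases h1 : i < a - c
      · constructor
        · have := hge (i + (a - (a - c))) (by omega)
          omega
        · have h2 : f (i + (a - (a - c))) < f (a + 0) := hfm _ _ (by omega) (by omega)
          have h3 := (hmid 0 (by omega)).2
          omega
      · by_cases h2 : i < (a - c) + p.1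
        · rw [show i + (a - (a - c)) = a + (i - (a - c)) from by omega]
          exact hmid (i - (a - c)) (by omega)
        · constructor
          · have h3 : f (a + (p.1 - 1)) < f (i + (a - (a - c))) := hfm _ _ (by omega) (by omega)
            have h4 := (hmid (p.1 - 1) (by omega)).1
            omega
          · have hL : f (i + (a - (a - c))) + ((a + p.1 + b - 1) - (i + (a - (a - c)))) ≤
                f (a + p.1 + b - 1) := hub _ _ (by omega) (by omega)
            have hLb : f (a + p.1 + b - 1) < c + q.1 + d := hfb _ (by omega)
            omega
    refine ⟨fun i => f (i + (a - (a - c))) - c, ?_, ?_, ?_⟩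
    · intro i hi
      dsimp only
      have := himg i hi
      omega
    · intro i j hij hj
      dsimp only
      have h1 := hfm (i + (a - (a - c))) (j + (a - (a - c))) (by omega) (by omega)
      have h2 := (himg i (by omega)).1
      omega
    · intro s t hs ht
      dsimp only
      have Hs := himg s hs
      have Ht := himg t ht
      have e1 : pvN (TS c q d) (f (s + (a - (a - c)))) =
          c + pvN q (f (s + (a - (a - c))) - c) := pvN_TS_mid' Hs.1 Hs.2
      have e2 : pvN (TS c q d) (f (t + (a - (a - c)))) =
          c + pvN q (f (t + (a - (a - c))) - c) := pvN_TS_mid' Ht.1 Ht.2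
      have h3 := hiff (s + (a - (a - c))) (t + (a - (a - c))) (by omega) (by omega)
      rw [e1, e2, TS_shift (show a - c ≤ a by omega) (show b - d ≤ b by omega) hs,
        TS_shift (show a - c ≤ a by omega) (show b - d ≤ b by omega) ht] at h3
      constructor
      · intro h
        have := h3.mp (by omega)
        omega
      · intro h
        have := h3.mpr (by omega)
        omega
  · rintro ⟨g, hgb, hgm, hgiff⟩
    refine ⟨fun i => if i < a - (a - c) then i
      else if i < a + p.1 + (b - d) then c + g (i - (a - (a - c)))
      else c + q.1 + (d - (b - (i - (a + p.1)))), ?_, ?_, ?_⟩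
      <;> [skip; skip; skip]
    all_goals {
      have hFval : ∀ u : ℕ, (u < a - (a - c) →
            (if u < a - (a - c) then u
              else if u < a + p.1 + (b - d) then c + g (u - (a - (a - c)))
              else c + q.1 + (d - (b - (u - (a + p.1))))) = u) ∧
          (a - (a - c) ≤ u → u < a + p.1 + (b - d) →
            (if u < a - (a - c) then u
              else if u < a + p.1 + (b - d) then c + g (u - (a - (a - c)))
              else c + q.1 + (d - (b - (u - (a + p.1))))) = c + g (u - (a - (a - c)))) ∧
          (a + p.1 + (b - d) ≤ u →
            (if u < a - (a - c) then u
              else if u < a + p.1 + (b - d) then c + g (u - (a - (a - c)))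
              else c + q.1 + (d - (b - (u - (a + p.1))))) =
              c + q.1 + (d - (b - (u - (a + p.1))))) := by
        intro u
        refine ⟨fun h => ?_, fun h1 h2 => ?_, fun h => ?_⟩
        · rw [if_pos h]
        · rw [if_neg (by omega), if_pos h2]
        · rw [if_neg (by omega), if_neg (by omega)]
      first
      | -- bounds
        { intro i hi
          dsimp only
          by_cases h1 : i < a - (a - c)
          · rw [(hFval i).1 h1]; omega
          · by_cases h2 : i < a + p.1 + (b - d)
            · rw [(hFval i).2.1 (by omega) h2]
              have := hgb (i - (a - (a - c))) (by omega)
              omega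
            · rw [(hFval i).2.2 (by omega)]
              omega }
      | -- strict monotonicity
        { intro i j hij hj
          dsimp only
          have hgbi : ∀ u, a - (a - c) ≤ u → u < a + p.1 + (b - d) →
              g (u - (a - (a - c))) < q.1 := fun u h1 h2 => hgb _ (by omega)
          by_cases c1 : i < a - (a - c)
          · rw [(hFval i).1 c1]
            by_cases d1 : j < a - (a - c)
            · rw [(hFval j).1 d1]; omega
            · by_cases d2 : j < a + p.1 + (b - d)
              · rw [(hFval j).2.1 (by omega) d2]; omega
              · rw [(hFval j).2.2 (by omega)]; omega
          · by_cases c2 : i < a + p.1 + (b - d)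
            · rw [(hFval i).2.1 (by omega) c2]
              by_cases d2 : j < a + p.1 + (b - d)
              · rw [(hFval j).2.1 (by omega) d2]
                have := hgm (i - (a - (a - c))) (j - (a - (a - c))) (by omega) (by omega)
                omega
              · rw [(hFval j).2.2 (by omega)]
                have := hgbi i (by omega) c2
                omega
            · rw [(hFval i).2.2 (by omega), (hFval j).2.2 (by omega)]
              omega }
      | -- order isomorphism
        { intro s t hs ht
          dsimp only
          have hsrc : ∀ u, u < a + p.1 + b →
              (u < a - (a - c) → pvN (TS a p b) u = u) ∧
              (a - (a - c) ≤ u → u < a + p.1 + (b - d) →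
                pvN (TS a p b) u =
                  pvN (TS (a - c) p (b - d)) (u - (a - (a - c))) + (a - (a - c))) ∧
              (a + p.1 + (b - d) ≤ u → pvN (TS a p b) u = u) := by
            intro u hu
            refine ⟨fun h => pvN_TS_lo (by omega), fun h1 h2 => ?_,
              fun h => pvN_TS_hi (by omega) hu⟩
            have := TS_shift (p := p) (show a - c ≤ a by omega) (show b - d ≤ b by omega)
              (s := u - (a - (a - c))) (by omega)
            rw [show u - (a - (a - c)) + (a - (a - c)) = u from by omega] at this
            omega
          have htgt : ∀ u, u < a + p.1 + b →
              (u < a - (a - c) →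
                pvN (TS c q d) (if u < a - (a - c) then u
                  else if u < a + p.1 + (b - d) then c + g (u - (a - (a - c)))
                  else c + q.1 + (d - (b - (u - (a + p.1))))) = u) ∧
              (a - (a - c) ≤ u → u < a + p.1 + (b - d) →
                pvN (TS c q d) (if u < a - (a - c) then u
                  else if u < a + p.1 + (b - d) then c + g (u - (a - (a - c)))
                  else c + q.1 + (d - (b - (u - (a + p.1))))) =
                  c + pvN q (g (u - (a - (a - c))))) ∧
              (a + p.1 + (b - d) ≤ u →
                pvN (TS c q d) (if u < a - (a - c) then u
                  else if u < a + p.1 + (b - d) then c + g (u - (a - (a - c)))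
                  else c + q.1 + (d - (b - (u - (a + p.1))))) =
                  c + q.1 + (d - (b - (u - (a + p.1))))) := by
            intro u hu
            refine ⟨fun h => ?_, fun h1 h2 => ?_, fun h => ?_⟩
            · rw [(hFval u).1 h]
              exact pvN_TS_lo (by omega)
            · rw [(hFval u).2.1 h1 h2]
              have hgu := hgb (u - (a - (a - c))) (by omega)
              rw [pvN_TS_mid' (by omega) (by omega)]
              rw [show c + g (u - (a - (a - c))) - c = g (u - (a - (a - c))) from by omega]
            · rw [(hFval u).2.2 h]
              exact pvN_TS_hi (by omega) (by omega)
          have hqs : ∀ u, a - (a - c) ≤ u → u < a + p.1 + (b - d) →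
              pvN q (g (u - (a - (a - c)))) < q.1 :=
            fun u h1 h2 => pvN_lt (hgb _ (by omega))
          have hvs : ∀ u, u < a + p.1 + (b - d) →
              pvN (TS (a - c) p (b - d)) (u - (a - (a - c))) < (a - c) + p.1 + (b - d) := by
            intro u hu
            have := pvN_lt (p := TS (a - c) p (b - d)) (i := u - (a - (a - c)))
            simp only [TS_fst] at this
            exact this (by omega)
          by_cases c1 : s < a - (a - c)
          · rw [(hsrc s hs).1 c1, (htgt s hs).1 c1]
            by_cases d1 : t < a - (a - c)
            · rw [(hsrc t ht).1 d1, (htgt t ht).1 d1]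
            · by_cases d2 : t < a + p.1 + (b - d)
              · rw [(hsrc t ht).2.1 (by omega) d2, (htgt t ht).2.1 (by omega) d2]
                have := hvs t d2
                constructor <;> intro <;> omega
              · rw [(hsrc t ht).2.2 (by omega), (htgt t ht).2.2 (by omega)]
                constructor <;> intro <;> omega
          · by_cases c2 : s < a + p.1 + (b - d)
            · rw [(hsrc s hs).2.1 (by omega) c2, (htgt s hs).2.1 (by omega) c2]
              have hvs' := hvs s c2
              by_cases d1 : t < a - (a - c)
              · rw [(hsrc t ht).1 d1, (htgt t ht).1 d1]
                constructor <;> intro <;> omega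
              · by_cases d2 : t < a + p.1 + (b - d)
                · rw [(hsrc t ht).2.1 (by omega) d2, (htgt t ht).2.1 (by omega) d2]
                  have h5 := hgiff (s - (a - (a - c))) (t - (a - (a - c)))
                    (by omega) (by omega)
                  constructor
                  · intro h
                    have := h5.mp (by omega)
                    omega
                  · intro h
                    have := h5.mpr (by omega)
                    omega
                · rw [(hsrc t ht).2.2 (by omega), (htgt t ht).2.2 (by omega)]
                  have := hqs s (by omega) c2
                  constructor <;> intro <;> omega
            · rw [(hsrc s hs).2.2 (by omega), (htgt s hs).2.2 (by omega)]
              by_cases d1 : t < a - (a - c)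
              · rw [(hsrc t ht).1 d1, (htgt t ht).1 d1]
                constructor <;> intro <;> omega
              · by_cases d2 : t < a + p.1 + (b - d)
                · rw [(hsrc t ht).2.1 (by omega) d2, (htgt t ht).2.1 (by omega) d2]
                  have := hqs t (by omega) d2
                  have := hvs t d2
                  constructor <;> intro <;> omega
                · rw [(hsrc t ht).2.2 (by omega), (htgt t ht).2.2 (by omega)]
                  constructor <;> intro <;> omega } }

/-- A triple sum with a nonempty extreme block has no "skew singleton". -/
lemma ts_no_skewsing {p : Pattern} {a b : ℕ} (hp : 1 ≤ p.1) (hab : 0 < a + b)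
    {x : ℕ} (hx : x < a + p.1 + b)
    (hlo : ∀ j, j < x → pvN (TS a p b) x < pvN (TS a p b) j)
    (hhi : ∀ j, x < j → j < a + p.1 + b → pvN (TS a p b) j < pvN (TS a p b) x) : False := by
  by_cases ha : 0 < a
  · have h0 : pvN (TS a p b) 0 = 0 := pvN_TS_lo ha
    by_cases hx0 : x = 0
    · subst hx0
      have := hhi 1 (by omega) (by omega)
      rw [h0] at this
      omega
    · have := hlo 0 (by omega)
      rw [h0] at this
      omega
  · have hb : 0 < b := by omega
    have hL : pvN (TS a p b) (a + p.1 + b - 1) = a + p.1 + b - 1 :=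
      pvN_TS_hi (by omega) (by omega)
    have hlt : ∀ z, z < a + p.1 + b → pvN (TS a p b) z < a + p.1 + b := by
      intro z hz
      have := pvN_lt (p := TS a p b) (i := z)
      simp only [TS_fst] at this
      exact this hz
    by_cases hxL : x = a + p.1 + b - 1
    · subst hxL
      have h2 := hlo 0 (by omega)
      have := hlt 0 (by omega)
      rw [hL] at h2
      omega
    · have h2 := hhi (a + p.1 + b - 1) (by omega) (by omega)
      have := hlt x hx
      rw [hL] at h2
      omega

lemma neg_step (p : Pattern) (hp : 1 ≤ p.1) {a b : ℕ} (hab : 0 < a + b)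
    (c d : ℕ) (q : Pattern) :
    Contains (TS a p b) (TK c q d) ↔ Contains (TS a p b) q := by
  rw [contains_iff, contains_iff]
  simp only [TS_fst, TK_fst]
  constructor
  · rintro ⟨f, hfb, hfm, hiff⟩
    have hmid : ∀ x, x < a + p.1 + b → c ≤ f x ∧ f x < c + q.1 := by
      intro x hx
      constructor
      · by_contra h
        push_neg at h
        refine ts_no_skewsing hp hab hx ?_ ?_
        · intro j hj
          have h1 : f j < f x := hfm _ _ hj (by omega)
          have h2 : pvN (TK c q d) (f x) < pvN (TK c q d) (f j) :=
            tk_cross h1 (by omega) (by omega)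
          exact (hiff x j hx (by omega)).mpr h2
        · intro j h1 h2
          have h3 : f x < f j := hfm _ _ h1 h2
          have h4 : pvN (TK c q d) (f j) < pvN (TK c q d) (f x) :=
            tk_cross h3 (hfb j h2) (by omega)
          exact (hiff j x h2 hx).mpr h4
      · by_contra h
        push_neg at h
        refine ts_no_skewsing hp hab hx ?_ ?_
        · intro j hj
          have h1 : f j < f x := hfm _ _ hj (by omega)
          have h2 : pvN (TK c q d) (f x) < pvN (TK c q d) (f j) :=
            tk_cross h1 (hfb x hx) (by omega)
          exact (hiff x j hx (by omega)).mpr h2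
        · intro j h1 h2
          have h3 : f x < f j := hfm _ _ h1 h2
          have h4 : pvN (TK c q d) (f j) < pvN (TK c q d) (f x) :=
            tk_cross h3 (hfb j h2) (by omega)
          exact (hiff j x h2 hx).mpr h4
    refine ⟨fun x => f x - c, ?_, ?_, ?_⟩
    · intro i hi
      dsimp only
      have := hmid i hi
      omega
    · intro i j hij hj
      dsimp only
      have h1 := hfm i j hij hj
      have h2 := (hmid i (by omega)).1
      omega
    · intro s t hs ht
      dsimp only
      have Hs := hmid s hs
      have Ht := hmid t ht
      have e1 : pvN (TK c q d) (f s) = d + pvN q (f s - c) := pvN_TK_mid' Hs.1 Hs.2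
      have e2 : pvN (TK c q d) (f t) = d + pvN q (f t - c) := pvN_TK_mid' Ht.1 Ht.2
      have h3 := hiff s t hs ht
      rw [e1, e2] at h3
      constructor
      · intro h
        have := h3.mp h
        omega
      · intro h
        exact h3.mpr (by omega)
  · rintro ⟨g, hgb, hgm, hgiff⟩
    refine ⟨fun x => c + g x, ?_, ?_, ?_⟩
    · intro i hi
      dsimp only
      have := hgb i hi
      omega
    · intro i j hij hj
      dsimp only
      have := hgm i j hij hj
      omega
    · intro s t hs ht
      dsimp only
      have e1 : pvN (TK c q d) (c + g s) = d + pvN q (g s) := pvN_TK_mid (hgb s hs)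
      have e2 : pvN (TK c q d) (c + g t) = d + pvN q (g t) := pvN_TK_mid (hgb t ht)
      rw [e1, e2]
      have h3 := hgiff s t hs ht
      constructor
      · intro h
        have := h3.mp h
        omega
      · intro h
        exact h3.mpr (by omega)

lemma contains_TS00 (p q : Pattern) : Contains (TS 0 p 0) q ↔ Contains p q := by
  rw [contains_iff, contains_iff]
  simp only [TS_fst]
  have hv : ∀ s, s < p.1 → pvN (TS 0 p 0) s = pvN p s := by
    intro s hs
    have := pvN_TS_mid' (c := 0) (d := 0) (p := p) (i := s) (by omega) (by omega)
    simpa using this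
  constructor
  · rintro ⟨f, hb, hm, hiff⟩
    refine ⟨f, fun i hi => hb i (by omega), fun i j hij hj => hm i j hij (by omega),
      fun s t hs ht => ?_⟩
    have := hiff s t (by omega) (by omega)
    rwa [hv s hs, hv t ht] at this
  · rintro ⟨f, hb, hm, hiff⟩
    refine ⟨f, fun i hi => hb i (by omega), fun i j hij hj => hm i j hij (by omega),
      fun s t hs ht => ?_⟩
    have := hiff s t (by omega) (by omega)
    rwa [hv s (by omega), hv t (by omega)]

lemma phiW_pos {e f : ℤ} {v : List (ℤ × ℤ)} {m : ℤ} (h : 0 ≤ e ∧ 0 ≤ f) :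
    PhiW ((e, f) :: v) m = TS e.toNat (PhiW v m) f.toNat := by
  rw [PhiW, if_pos h]
  rfl

lemma phiW_neg {e f : ℤ} {v : List (ℤ × ℤ)} {m : ℤ} (h : ¬ (0 ≤ e ∧ 0 ≤ f)) :
    PhiW ((e, f) :: v) m = TK (-e).toNat (PhiW v m) (-f).toNat := by
  rw [PhiW, if_neg h]
  rfl

lemma phiW_size (v : List (ℤ × ℤ)) (m : ℤ) (hm : 2 ≤ m.natAbs) : 2 ≤ (PhiW v m).1 := by
  induction v with
  | nil =>
    show 2 ≤ (monoPat m).1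
    rw [monoPat]
    split
    · show 2 ≤ m.toNat
      omega
    · show 2 ≤ (-m).toNat
      omega
  | cons ef v ih =>
    obtain ⟨e, f⟩ := ef
    by_cases h : 0 ≤ e ∧ 0 ≤ f
    · rw [phiW_pos h, TS_fst]
      omega
    · rw [phiW_neg h, TK_fst]
      omega

lemma signA_true {e f : ℤ} (h : 0 ≤ e ∧ 0 ≤ f) : signA (e, f) = true := by
  simp [signA]
  exact h

lemma signA_false {e f : ℤ} (h : ¬ (0 ≤ e ∧ 0 ≤ f)) : signA (e, f) = false := by
  simp [signA]
  intro h1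
  rcases lt_or_ge f 0 with h2 | h2
  · exact h2
  · exact absurd ⟨h1, h2⟩ h

lemma posContent_cons_pos {ef : ℤ × ℤ} {u : List (ℤ × ℤ)} (h : signA ef = true) :
    posContent (ef :: u) = ef + posContent u := by
  simp [posContent, List.filter_cons, h]

lemma posContent_cons_neg {ef : ℤ × ℤ} {u : List (ℤ × ℤ)} (h : signA ef = false) :
    posContent (ef :: u) = posContent u := by
  simp [posContent, List.filter_cons, h]

lemma contentGE_nil {a b : ℤ} (hab : 0 < a ∨ 0 < b) :
    ¬ contentGE (posContent []) (a, b) := by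
  simp [posContent, contentGE]
  omega

lemma contentGE_shift {e f a b : ℤ} {X : ℤ × ℤ} :
    contentGE ((e, f) + X) (a, b) ↔ contentGE X (a - e, b - f) := by
  simp only [contentGE, Prod.fst_add, Prod.snd_add]
  constructor <;> intro ⟨h1, h2⟩ <;> constructor <;> omega

/-- The main induction over the letters of `t`. -/
lemma main_induction (π : Pattern) (hπ : 1 ≤ π.1) (hS : NoSumSing π) :
    ∀ (ws : List (ℤ × ℤ)) (mt : ℤ) (a b : ℤ), (0 < a ∨ 0 < b) →
    (Contains (TS a.toNat π b.toNat) (PhiW ws mt) ↔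
      ∃ k : ℕ, k ≤ ws.length ∧
        contentGE (posContent (ws.take k)) (a, b) ∧
        (∀ j < k, ¬ contentGE (posContent (ws.take j)) (a, b)) ∧
        Contains π (PhiW (ws.drop k) mt)) := by
  intro ws
  induction ws with
  | nil =>
    intro mt a b hab
    constructor
    · intro h
      exfalso
      have hm : PhiW [] mt = monoPat mt := rfl
      rw [hm, monoPat] at h
      by_cases hmt : 0 < mt
      · rw [if_pos hmt] at h
        exact no_contains_id hS hπ _ _ _ h
      · rw [if_neg hmt] at h
        exact no_contains_rev hπ (by omega) _ h
    · rintro ⟨k, hk0, hge, _, _⟩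
      have hk : k = 0 := by simpa using hk0
      subst hk
      exact absurd hge (contentGE_nil hab)
  | cons ef u ih =>
    intro mt a b hab
    obtain ⟨c, d⟩ := ef
    by_cases hsg : 0 ≤ c ∧ 0 ≤ d
    · rw [phiW_pos hsg, pos_step π hπ hS]
      have hA : signA (c, d) = true := signA_true hsg
      by_cases hcd : a ≤ c ∧ b ≤ d
      · rw [show a.toNat - c.toNat = 0 from by omega, show b.toNat - d.toNat = 0 from by omega,
          contains_TS00]
        constructor
        · intro h
          refine ⟨1, by simp, ?_, ?_, by simpa using h⟩
          · rw [show List.take 1 ((c, d) :: u) = [(c, d)] from by simp,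
              show posContent [(c, d)] = (c, d) + posContent [] from posContent_cons_pos hA]
            rw [contentGE_shift]
            simp [posContent, contentGE]
            omega
          · intro j hj
            have : j = 0 := by omega
            subst this
            exact contentGE_nil hab
        · rintro ⟨k, hkl, hge, hmin, hcont⟩
          have hk1 : k = 1 := by
            by_contra hne
            rcases Nat.lt_or_ge k 1 with h | h
            · have : k = 0 := by omega
              subst this
              exact absurd hge (contentGE_nil hab)
            · have h2 := hmin 1 (by omega)
              apply h2
              rw [show List.take 1 ((c, d) :: u) = [(c, d)] from by simp,
                show posContent [(c, d)] = (c, d) + posContent [] from posContent_cons_pos hA]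
              rw [contentGE_shift]
              simp [posContent, contentGE]
              omega
          subst hk1
          simpa using hcont
      · rw [show a.toNat - c.toNat = (a - c).toNat from by omega,
          show b.toNat - d.toNat = (b - d).toNat from by omega,
          ih mt (a - c) (b - d) (by omega)]
        constructor
        · rintro ⟨k, hkl, hge, hmin, hcont⟩
          refine ⟨k + 1, by simpa using hkl, ?_, ?_, by simpa using hcont⟩
          · rw [List.take_succ_cons, posContent_cons_pos hA, contentGE_shift]
            exact hge
          · intro j hj
            match j with
            | 0 => exact contentGE_nil hab
            | j + 1 =>
              rw [List.take_succ_cons, posContent_cons_pos hA, contentGE_shift]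
              exact hmin j (by omega)
        · rintro ⟨k, hkl, hge, hmin, hcont⟩
          match k with
          | 0 => exact absurd hge (contentGE_nil hab)
          | k + 1 =>
            rw [List.take_succ_cons, posContent_cons_pos hA, contentGE_shift] at hge
            refine ⟨k, by simpa using hkl, hge, ?_, by simpa using hcont⟩
            intro j hj
            have := hmin (j + 1) (by omega)
            rwa [List.take_succ_cons, posContent_cons_pos hA, contentGE_shift] at this
    · rw [phiW_neg hsg, neg_step π hπ (by omega), ih mt a b hab]
      have hA : signA (c, d) = false := signA_false hsg
      constructor
      · rintro ⟨k, hkl, hge, hmin, hcont⟩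
        refine ⟨k + 1, by simpa using hkl, ?_, ?_, by simpa using hcont⟩
        · rw [List.take_succ_cons, posContent_cons_neg hA]
          exact hge
        · intro j hj
          match j with
          | 0 => exact contentGE_nil hab
          | j + 1 =>
            rw [List.take_succ_cons, posContent_cons_neg hA]
            exact hmin j (by omega)
      · rintro ⟨k, hkl, hge, hmin, hcont⟩
        match k with
        | 0 => exact absurd hge (contentGE_nil hab)
        | k + 1 =>
          rw [List.take_succ_cons, posContent_cons_neg hA] at hge
          refine ⟨k, by simpa using hkl, hge, ?_, by simpa using hcont⟩
          intro j hj
          have := hmin (j + 1) (by omega)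
          rwa [List.take_succ_cons, posContent_cons_neg hA] at this
/-- for w = (a,b)v ∈ L with (a,b) ∈ A⁺ and t ∈ L, Φ(w) ≤ Φ(t) iff the
(a,b)-prefix of t is defined (a minimal prefix of t with positive content ≥ (a,b))
and Φ(v) ≤ Φ(s) where s is the (a,b)-remainder of t. -/
theorem PhiL_contains_iff_prefix (a b : ℤ) (hab : isAPlusL (a, b))
    (v : List (ℤ × ℤ)) (mw : ℤ) (hw : ValidL (.word ((a, b) :: v) mw))
    (t : LWord) (ht : ValidL t) :
    Contains (PhiL (.word ((a, b) :: v) mw)) (PhiL t) ↔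
      ∃ k : ℕ, k ≤ (aLetters t).length ∧
        contentGE (posContent ((aLetters t).take k)) (a, b) ∧
        (∀ j < k, ¬ contentGE (posContent ((aLetters t).take j)) (a, b)) ∧
        Contains (PhiW v mw) (PhiL (dropA t k)) := by
  obtain ⟨ha, hb, hne⟩ := hab
  have ha' : 0 ≤ a := ha
  have hb' : 0 ≤ b := hb
  have hne' : 0 < a ∨ 0 < b := by
    by_contra h
    push_neg at h
    exact hne (by rw [show a = 0 from by omega, show b = 0 from by omega])
  obtain ⟨hM, hLet, hChain⟩ := hw
  have hM' : 2 ≤ mw.natAbs := by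
    have h2 : (2 : ℤ) ≤ |mw| := hM
    rw [Int.abs_eq_natAbs] at h2
    omega
  have hπ : 1 ≤ (PhiW v mw).1 := by
    have := phiW_size v mw hM'
    omega
  have hSg : signA (a, b) = true := signA_true ⟨ha', hb'⟩
  have hS : NoSumSing (PhiW v mw) := by
    cases v with
    | nil =>
      have hne2 : signA (a, b) ≠ signM mw := by
        simpa [List.Chain', List.isChain_pair] using hChain
      have hmw : ¬ 0 < mw := by
        intro h
        apply hne2
        rw [hSg, signM]
        simp [h]
      show NoSumSing (monoPat mw)
      rw [monoPat, if_neg hmw]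
      exact noSumSing_rev (by omega)
    | cons ef v' =>
      obtain ⟨e, f⟩ := ef
      have hne2 : signA (a, b) ≠ signA (e, f) := by
        have h3 := hChain
        simp only [List.map_cons, List.cons_append, List.Chain', List.isChain_cons_cons] at h3
        exact h3.1
      have hef : ¬ (0 ≤ e ∧ 0 ≤ f) := by
        intro h
        exact hne2 (by rw [hSg, signA_true h])
      have hmem : isAPlusL (e, f) ∨ isAMinusL (e, f) := hLet (e, f) (by simp)
      have hem : isAMinusL (e, f) := by
        rcases hmem with h | h
        · exact absurd ⟨h.1, h.2.1⟩ hef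
        · exact h
      obtain ⟨he, hf, hnef⟩ := hem
      have he' : e ≤ 0 := he
      have hf' : f ≤ 0 := hf
      have hne0 : ¬ (e = 0 ∧ f = 0) := by
        rintro ⟨h1, h2⟩
        exact hnef (by rw [h1, h2])
      rw [phiW_neg hef]
      exact noSumSing_TK (by omega) (by have := phiW_size v' mw hM'; omega)
  cases t with
  | one =>
    simp only [PhiL, aLetters, dropA]
    constructor
    · intro h
      exfalso
      rw [show PhiW ((a, b) :: v) mw = TS a.toNat (PhiW v mw) b.toNat from
        phiW_pos ⟨ha', hb'⟩] at h
      exact no_contains_id hS hπ a.toNat b.toNat 1 h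
    · rintro ⟨k, hk0, hge, -, -⟩
      have hk : k = 0 := by simpa using hk0
      subst hk
      exact absurd hge (contentGE_nil hne')
  | word ws mt =>
    simp only [PhiL, aLetters, dropA]
    rw [show PhiW ((a, b) :: v) mw = TS a.toNat (PhiW v mw) b.toNat from
      phiW_pos ⟨ha', hb'⟩]
    exact main_induction (PhiW v mw) hπ hS ws mt a b hne'
end

section
/- The class SIO has no incompatible pairs: for any two sum-indecomposable permutations π, θ ∈ SIO, the direct sum π ⊕ θ is contained in some sum-indecomposable permutation of SIO of size at most |π| + |θ| + 2. -/
open Equiv Filter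

/-- The infinite increasing oscillation 2, 4, 1, 6, 3, 8, 5, 10, 7, ... (indexed from 1):
ω(1)=2, ω(2)=4, ω(3)=1 and for k ≥ 2, ω(2k) = 2k+2 and ω(2k+1) = 2k−1. -/
def osc (i : ℕ) : ℕ :=
  if i = 1 then 2 else if i = 2 then 4 else if i = 3 then 1 else
    if i % 2 = 0 then i + 2 else i - 2

/-- The oscillation re-indexed from 0. -/
def osc0 (i : ℕ) : ℕ := osc (i + 1)

/-- The inversion graph of the infinite increasing oscillation: i and j are adjacent
iff they form an inversion. -/
def oscGraph : SimpleGraph ℕ where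
  Adj i j := (i < j ∧ osc0 j < osc0 i) ∨ (j < i ∧ osc0 i < osc0 j)
  symm := ⟨fun a b h => h.elim (fun h => Or.inr h) (fun h => Or.inl h)⟩
  loopless := ⟨by intro a h; rcases h with ⟨h, _⟩ | ⟨h, _⟩ <;> omega⟩

/-- Membership in SIO: the permutation occurs as a pattern of the infinite
increasing oscillation. -/
def InSIO (p : Pattern) : Prop :=
  ∃ f : Fin p.1 → ℕ, StrictMono f ∧ ∀ s t, p.2 s < p.2 t ↔ osc0 (f s) < osc0 (f t)

/-- A nonempty permutation is sum-indecomposable if it is not a direct sum of two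
nonempty permutations. -/
def SumIndec (p : Pattern) : Prop :=
  0 < p.1 ∧ ¬ ∃ q r : Pattern, 0 < q.1 ∧ 0 < r.1 ∧ p = sumP q r

namespace SioAux

def pidx (j : ℕ) : ℕ := if j = 0 then 0 else if j % 2 = 0 then j - 1 else j + 1

lemma osc0_eq (j : ℕ) : osc0 j = if j = 0 then 2 else if j % 2 = 1 then j + 3 else j - 1 := by
  simp only [osc0, osc]
  rcases Nat.eq_zero_or_pos j with h | h
  · subst h; norm_num
  · split_ifs <;> first | contradiction | omega

lemma osc0_inj : Function.Injective osc0 := by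
  intro a b h
  rw [osc0_eq, osc0_eq] at h
  split_ifs at h <;> first | contradiction | omega

lemma pidx_pidx (j : ℕ) : pidx (pidx j) = j := by
  simp only [pidx]; split_ifs <;> first | contradiction | omega

lemma pidx_inj : Function.Injective pidx := by
  intro a b h
  have := pidx_pidx a; rw [h, pidx_pidx] at this; omega

lemma osc0_pidx (k : ℕ) : osc0 (pidx k) = if k % 2 = 0 then k + 2 else k := by
  rw [osc0_eq]; simp only [pidx]; split_ifs <;> first | contradiction | omega

/-- consecutive path indices form an inversion -/
lemma adj_inversion (d : ℕ) :
    (pidx d < pidx (d+1) ∧ osc0 (pidx (d+1)) < osc0 (pidx d)) ∨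
    (pidx (d+1) < pidx d ∧ osc0 (pidx d) < osc0 (pidx (d+1))) := by
  rw [osc0_pidx, osc0_pidx]
  simp only [pidx]; split_ifs <;> first | contradiction | omega

/-- separation: path indices ≤ e are below-left of path indices ≥ e+2 (with parity condition
when the gap is exactly 2) -/
lemma sep {e k k' : ℕ} (hk : k ≤ e) (hk' : e + 2 ≤ k') :
    pidx k < pidx k' ∧ osc0 (pidx k) < osc0 (pidx k') := by
  rw [osc0_pidx, osc0_pidx]
  simp only [pidx]; split_ifs <;> first | contradiction | omega

/-- the shift map: increases osc0 by 2 and pidx by 2. -/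
def phi (j : ℕ) : ℕ := if j = 0 then 1 else j + 2

lemma phi_mono : StrictMono phi := by
  intro a b h; simp only [phi]; split_ifs <;> first | contradiction | omega

lemma osc0_phi (j : ℕ) : osc0 (phi j) = osc0 j + 2 := by
  rw [osc0_eq, osc0_eq]; simp only [phi]; split_ifs <;> first | contradiction | omega

lemma pidx_phi (j : ℕ) : pidx (phi j) = pidx j + 2 := by
  simp only [phi, pidx]; split_ifs <;> first | contradiction | omega

end SioAux
namespace SioAux

variable (S : Finset ℕ)

noncomputable def posE : Fin S.card ≃o {x // x ∈ S} := S.orderIsoOfFin rfl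

lemma card_image_osc0 : (S.image osc0).card = S.card :=
  Finset.card_image_of_injective _ osc0_inj

noncomputable def valE : Fin S.card ≃o {x // x ∈ S.image osc0} :=
  S.image osc0 |>.orderIsoOfFin (card_image_osc0 S)

noncomputable def patPermFun : Fin S.card → Fin S.card := fun i =>
  (valE S).symm ⟨osc0 (posE S i), Finset.mem_image_of_mem _ (posE S i).2⟩

lemma patPermFun_inj : Function.Injective (patPermFun S) := by
  intro a b h
  simp only [patPermFun] at h
  have := congrArg (fun z => ((valE S) z : ℕ)) h
  simp only [OrderIso.apply_symm_apply] at this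
  exact (posE S).injective (Subtype.ext (osc0_inj this))

noncomputable def patPerm : Equiv.Perm (Fin S.card) :=
  Equiv.ofBijective _ (Finite.injective_iff_bijective.mp (patPermFun_inj S))

noncomputable def patOf : Pattern := ⟨S.card, patPerm S⟩

lemma patPerm_lt_iff (i j : Fin S.card) :
    patPerm S i < patPerm S j ↔ osc0 ((posE S i : ℕ)) < osc0 ((posE S j : ℕ)) := by
  show patPermFun S i < patPermFun S j ↔ _
  simp only [patPermFun]
  rw [← (valE S).lt_iff_lt]
  simp only [OrderIso.apply_symm_apply]
  exact Iff.rfl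

lemma posE_strictMono : StrictMono (fun i => ((posE S i : ℕ))) := by
  intro a b h
  exact (posE S).lt_iff_lt.mpr h

lemma inSIO_patOf : InSIO (patOf S) := by
  refine ⟨fun i => (posE S i : ℕ), posE_strictMono S, fun s t => ?_⟩
  show patPerm S s < patPerm S t ↔ _
  exact patPerm_lt_iff S s t

lemma posE_symm_val (S : Finset ℕ) (x : ℕ) (hx : x ∈ S) :
    ((posE S ((posE S).symm ⟨x, hx⟩) : ℕ)) = x := by
  rw [(posE S).apply_symm_apply]

/-- transfer: an osc0-embedding with range inside S gives containment in patOf S. -/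
lemma contains_patOf (t : Pattern) (h : Fin t.1 → ℕ) (hmono : StrictMono h)
    (hpat : ∀ s u, t.2 s < t.2 u ↔ osc0 (h s) < osc0 (h u))
    (hrange : ∀ i, h i ∈ S) : Contains t (patOf S) := by
  refine ⟨fun i => (posE S).symm ⟨h i, hrange i⟩, ?_, ?_⟩
  · intro a b hab
    have : (⟨h a, hrange a⟩ : {x // x ∈ S}) < ⟨h b, hrange b⟩ := by
      exact Subtype.mk_lt_mk.mpr (hmono hab)
    exact (posE S).symm.lt_iff_lt.mpr this
  · intro s u
    rw [hpat]
    show _ ↔ patPerm S _ < patPerm S _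
    rw [patPerm_lt_iff]
    simp only [OrderIso.apply_symm_apply]

end SioAux
namespace SioAux

lemma sumPerm_val {m n : ℕ} (α : Equiv.Perm (Fin m)) (β : Equiv.Perm (Fin n)) (i : Fin (m+n)) :
    ((sumPerm α β) i).val =
      if h : i.val < m then (α ⟨i.val, h⟩).val else m + (β ⟨i.val - m, by omega⟩).val := by
  rcases hc : finSumFinEquiv.symm i with a | b
  · have hi : i = finSumFinEquiv (Sum.inl a) := by
      rw [← hc, Equiv.apply_symm_apply]
    have hiv : i.val = a.val := by rw [hi]; simp
    have : (sumPerm α β) i = finSumFinEquiv (Sum.inl (α a)) := by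
      simp [sumPerm, hc, Equiv.trans_apply]
    rw [this]
    have ha : a.val < m := a.2
    rw [dif_pos (by omega : i.val < m)]
    simp only [finSumFinEquiv_apply_left, Fin.coe_castAdd]
    congr 1
    apply congrArg
    exact Fin.ext hiv.symm
  · have hi : i = finSumFinEquiv (Sum.inr b) := by
      rw [← hc, Equiv.apply_symm_apply]
    have hiv : i.val = m + b.val := by rw [hi]; simp
    have : (sumPerm α β) i = finSumFinEquiv (Sum.inr (β b)) := by
      simp [sumPerm, hc, Equiv.trans_apply]
    rw [this]
    rw [dif_neg (by omega : ¬ i.val < m)]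
    have hb : (⟨i.val - m, by omega⟩ : Fin n) = b := Fin.ext (by simp; omega)
    rw [hb]
    simp

/-- E1: a direct sum has a prefix split at q.1. -/
lemma sum_split {m n : ℕ} (α : Equiv.Perm (Fin m)) (β : Equiv.Perm (Fin n)) (i : Fin (m+n)) :
    i.val < m ↔ ((sumPerm α β) i).val < m := by
  rw [sumPerm_val]
  split_ifs with h
  · exact iff_of_true h (α ⟨i.val, h⟩).2
  · exact iff_of_false h (by omega)

/-- E2: a prefix split gives a direct sum decomposition. -/
lemma split_decomp {k l : ℕ} (hk : 0 < k) (hl : 0 < l) (π : Equiv.Perm (Fin (k+l)))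
    (hsplit : ∀ i : Fin (k+l), i.val < k ↔ (π i).val < k) :
    ∃ (α : Equiv.Perm (Fin k)) (β : Equiv.Perm (Fin l)), π = sumPerm α β := by
  have hsplit' : ∀ i : Fin (k+l), k ≤ i.val ↔ k ≤ (π i).val := by
    intro i; have := hsplit i; omega
  set αf : Fin k → Fin k := fun a =>
    ⟨(π ⟨a.val, by omega⟩).val, by
      exact (hsplit ⟨a.val, by omega⟩).mp a.2⟩ with hαf
  set βf : Fin l → Fin l := fun b =>
    ⟨(π ⟨k + b.val, by omega⟩).val - k, by
      have h1 := (hsplit' ⟨k + b.val, by omega⟩).mp (by simp)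
      have h2 := (π ⟨k + b.val, by omega⟩).2
      omega⟩ with hβf
  have hαinj : Function.Injective αf := by
    intro a b h
    simp only [hαf, Fin.mk.injEq] at h
    have := π.injective (Fin.ext h : π ⟨a.val, by omega⟩ = π ⟨b.val, by omega⟩)
    exact Fin.ext (by simpa [Fin.ext_iff] using this)
  have hβinj : Function.Injective βf := by
    intro a b h
    simp only [hβf, Fin.mk.injEq] at h
    have hka := (hsplit' ⟨k + a.val, by omega⟩).mp (by simp)
    have hkb := (hsplit' ⟨k + b.val, by omega⟩).mp (by simp)
    have : π ⟨k + a.val, by omega⟩ = π ⟨k + b.val, by omega⟩ := Fin.ext (by omega)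
    have := π.injective this
    exact Fin.ext (by simpa [Fin.ext_iff] using this)
  let α : Equiv.Perm (Fin k) := Equiv.ofBijective _ (Finite.injective_iff_bijective.mp hαinj)
  let β : Equiv.Perm (Fin l) := Equiv.ofBijective _ (Finite.injective_iff_bijective.mp hβinj)
  refine ⟨α, β, ?_⟩
  apply Equiv.ext
  intro i
  apply Fin.ext
  rw [sumPerm_val]
  split_ifs with h
  · show (π i).val = (αf ⟨i.val, h⟩).val
    simp only [hαf]
  · show (π i).val = k + (βf ⟨i.val - k, by omega⟩).val
    simp only [hβf]
    have h1 : (⟨k + (i.val - k), by omega⟩ : Fin (k+l)) = i := Fin.ext (by simp; omega)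
    rw [h1]
    have h2 := (hsplit' i).mp (by omega)
    omega

/-- decomposition at pattern level -/
lemma pattern_decomp (p : Pattern) (k l : ℕ) (hkl : p.1 = k + l) (hk : 0 < k) (hl : 0 < l)
    (hsplit : ∀ i : Fin p.1, i.val < k ↔ (p.2 i).val < k) :
    ∃ q r : Pattern, 0 < q.1 ∧ 0 < r.1 ∧ p = sumP q r := by
  obtain ⟨n, π⟩ := p
  simp only at hkl
  subst hkl
  obtain ⟨α, β, hαβ⟩ := split_decomp hk hl π hsplit
  exact ⟨⟨k, α⟩, ⟨l, β⟩, hk, hl, by simp [sumP, hαβ]⟩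

end SioAux
namespace SioAux

lemma gap_sep {c k k' : ℕ} (h1 : k < c) (h2 : c < k') :
    pidx k < pidx k' ∧ osc0 (pidx k) < osc0 (pidx k') := by
  rw [osc0_pidx, osc0_pidx]
  simp only [pidx]; split_ifs <;> first | contradiction | omega

lemma downclosed_mem_iff {n : ℕ} (A : Finset (Fin n))
    (hdc : ∀ i j : Fin n, i ≤ j → j ∈ A → i ∈ A) (i : Fin n) : i ∈ A ↔ i.val < A.card := by
  constructor
  · intro hi
    have hsub : Finset.Iic i ⊆ A := fun j hj => hdc j i (Finset.mem_Iic.mp hj) hi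
    have := Finset.card_le_card hsub
    rw [Fin.card_Iic] at this; omega
  · intro hi
    by_contra hni
    have hsub : A ⊆ Finset.Iio i := by
      intro j hj
      rw [Finset.mem_Iio]
      by_contra hji
      push_neg at hji
      exact hni (hdc i j hji hj)
    have := Finset.card_le_card hsub
    rw [Fin.card_Iio] at this; omega

/-- For a sum-indecomposable pattern embedded in the oscillation, the path-index image
has no gaps. -/
lemma embed_nogap (p : Pattern) (hip : SumIndec p) (f : Fin p.1 → ℕ)
    (hmono : StrictMono f) (hpat : ∀ s t, p.2 s < p.2 t ↔ osc0 (f s) < osc0 (f t))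
    (c : ℕ) (hlo : ∃ i, pidx (f i) < c) (hhi : ∃ j, c < pidx (f j)) :
    ∃ i, pidx (f i) = c := by
  by_contra hc
  push_neg at hc
  set A : Finset (Fin p.1) := Finset.univ.filter (fun i => pidx (f i) < c) with hA
  have hmemA : ∀ i, i ∈ A ↔ pidx (f i) < c := by intro i; simp [hA]
  have hnotA : ∀ i, i ∉ A → c < pidx (f i) := by
    intro i hi
    rw [hmemA] at hi
    rcases Nat.lt_trichotomy (pidx (f i)) c with h | h | h
    · exact absurd h hi
    · exact absurd h (hc i)
    · exact h
  have hsep : ∀ i j, i ∈ A → j ∉ A → f i < f j ∧ p.2 i < p.2 j := by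
    intro i j hi hj
    have h1 := (hmemA i).mp hi
    have h2 := hnotA j hj
    have hg := gap_sep h1 h2
    rw [pidx_pidx, pidx_pidx] at hg
    exact ⟨hg.1, (hpat i j).mpr hg.2⟩
  have hdc : ∀ i j : Fin p.1, i ≤ j → j ∈ A → i ∈ A := by
    intro i j hij hj
    by_contra hi
    exact absurd (hmono.lt_iff_lt.mp (hsep j i hj hi).1) (not_lt.mpr hij)
  set k := A.card with hk
  obtain ⟨i0, hi0⟩ := hlo
  obtain ⟨j0, hj0⟩ := hhi
  have hi0A : i0 ∈ A := (hmemA i0).mpr hi0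
  have hj0A : j0 ∉ A := by
    rw [hmemA]; omega
  have hkpos : 0 < k := Finset.card_pos.mpr ⟨i0, hi0A⟩
  have hklt : k < p.1 := by
    have hss : A ⊂ Finset.univ := Finset.ssubset_univ_iff.mpr (fun h => hj0A (h ▸ Finset.mem_univ j0))
    have := Finset.card_lt_card hss
    simpa using this
  -- value set
  set V : Finset (Fin p.1) := A.image p.2 with hV
  have hVcard : V.card = k := Finset.card_image_of_injective _ p.2.injective
  have hVdc : ∀ v x : Fin p.1, v ≤ x → x ∈ V → v ∈ V := by
    intro v x hvx hx
    rw [hV, Finset.mem_image] at hx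
    obtain ⟨j, hjA, hjx⟩ := hx
    have hiv : p.2 (p.2.symm v) = v := p.2.apply_symm_apply v
    have hmem : p.2.symm v ∈ A := by
      by_contra hni
      have := (hsep j (p.2.symm v) hjA hni).2
      rw [hiv, hjx] at this
      exact absurd hvx (not_le.mpr this)
    rw [hV, Finset.mem_image]
    exact ⟨_, hmem, hiv⟩
  have hVmem : ∀ v, v ∈ V ↔ v.val < k := by
    intro v
    rw [downclosed_mem_iff V (fun i j h1 h2 => hVdc i j h1 h2), hVcard]
  have hmemV_iff : ∀ i, p.2 i ∈ V ↔ i ∈ A := by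
    intro i
    constructor
    · intro h
      rw [hV, Finset.mem_image] at h
      obtain ⟨j, hjA, hji⟩ := h
      rwa [← p.2.injective hji]
    · intro h
      rw [hV, Finset.mem_image]
      exact ⟨i, h, rfl⟩
  have hsplit : ∀ i : Fin p.1, i.val < k ↔ (p.2 i).val < k := by
    intro i
    rw [← downclosed_mem_iff A hdc, ← hVmem, hmemV_iff]
  obtain ⟨q, r, hq, hr, hqr⟩ := pattern_decomp p k (p.1 - k) (by omega) hkpos (by omega) hsplit
  exact hip.2 ⟨q, r, hq, hr, hqr⟩

/-- interval bounds for the path image of a sum-indecomposable embedded pattern -/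
lemma embed_bounds (p : Pattern) (hip : SumIndec p) (f : Fin p.1 → ℕ)
    (hmono : StrictMono f) (hpat : ∀ s t, p.2 s < p.2 t ↔ osc0 (f s) < osc0 (f t)) :
    ∃ a, (∀ i, a ≤ pidx (f i) ∧ pidx (f i) < a + p.1) := by
  have hpos : 0 < p.1 := hip.1
  set T : Finset ℕ := Finset.univ.image (fun i => pidx (f i)) with hT
  have hTne : T.Nonempty := ⟨pidx (f ⟨0, hpos⟩), by simp [hT]⟩
  set a := T.min' hTne with ha
  set M := T.max' hTne with hM
  have hmemT : ∀ i, pidx (f i) ∈ T := fun i => by simp [hT]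
  have hsubIcc : Finset.Icc a M ⊆ T := by
    intro c hcm
    rw [Finset.mem_Icc] at hcm
    by_cases hcT : c ∈ T
    · exact hcT
    · have haT : a ∈ T := T.min'_mem hTne
      have hMT : M ∈ T := T.max'_mem hTne
      rw [hT, Finset.mem_image] at haT hMT
      obtain ⟨ia, _, hia⟩ := haT
      obtain ⟨iM, _, hiM⟩ := hMT
      have hac : a ≠ c := fun h => hcT (h ▸ T.min'_mem hTne)
      have hMc : M ≠ c := fun h => hcT (h ▸ T.max'_mem hTne)
      obtain ⟨i, hi⟩ := embed_nogap p hip f hmono hpat c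
        ⟨ia, by omega⟩ ⟨iM, by omega⟩
      exact absurd (hi ▸ hmemT i) hcT
  have hcard1 : (Finset.Icc a M).card ≤ T.card := Finset.card_le_card hsubIcc
  have hcard2 : T.card ≤ p.1 := by
    calc T.card ≤ Finset.univ.card := Finset.card_image_le
    _ = p.1 := by simp
  rw [Nat.card_Icc] at hcard1
  have haM : a ≤ M := T.min'_le _ (T.max'_mem hTne)
  refine ⟨a, fun i => ⟨T.min'_le _ (hmemT i), ?_⟩⟩
  have := T.le_max' _ (hmemT i)
  omega

end SioAux
namespace SioAux

/-- shift an embedding up by 2t in path-index terms -/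
lemma shift_embed (p : Pattern) (f : Fin p.1 → ℕ) (hmono : StrictMono f)
    (hpat : ∀ s t, p.2 s < p.2 t ↔ osc0 (f s) < osc0 (f t)) (t : ℕ) :
    ∃ f' : Fin p.1 → ℕ, StrictMono f' ∧ (∀ s u, p.2 s < p.2 u ↔ osc0 (f' s) < osc0 (f' u)) ∧
      ∀ i, pidx (f' i) = pidx (f i) + 2 * t := by
  induction t with
  | zero => exact ⟨f, hmono, hpat, fun i => by omega⟩
  | succ t ih =>
    obtain ⟨f', h1, h2, h3⟩ := ih
    refine ⟨fun i => phi (f' i), fun a b hab => phi_mono (h1 hab), ?_, ?_⟩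
    · intro s u
      rw [h2 s u, osc0_phi, osc0_phi]
      omega
    · intro i
      rw [pidx_phi, h3]
      omega

/-- a sum-decomposable pattern has a prefix split -/
lemma decomposable_split (P : Pattern) (h : ∃ q r : Pattern, 0 < q.1 ∧ 0 < r.1 ∧ P = sumP q r) :
    ∃ k, 0 < k ∧ k < P.1 ∧ ∀ i : Fin P.1, i.val < k ↔ (P.2 i).val < k := by
  obtain ⟨q, r, hq, hr, rfl⟩ := h
  refine ⟨q.1, hq, by simp [sumP]; omega, ?_⟩
  intro i
  exact sum_split q.2 r.2 i

lemma flip_exists (Q : ℕ → Prop) {A B d1 d2 : ℕ}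
    (hd1 : A ≤ d1 ∧ d1 ≤ B ∧ Q d1) (hd2 : A ≤ d2 ∧ d2 ≤ B ∧ ¬ Q d2) :
    ∃ d, A ≤ d ∧ d < B ∧ ((Q d ∧ ¬ Q (d+1)) ∨ (¬ Q d ∧ Q (d+1))) := by
  by_contra hno
  push_neg at hno
  have hno' : ∀ d, A ≤ d → d < B → (Q d ↔ Q (d+1)) := by
    intro d h1 h2
    have := hno d h1 h2
    constructor
    · intro hQd
      exact this.1 hQd
    · intro hQd1
      by_contra hn
      exact (this.2 hn) hQd1
  have hconst : ∀ j, A ≤ j → j ≤ B → (Q A ↔ Q j) := by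
    intro j hAj hjB
    induction j with
    | zero =>
      have hA0 : A = 0 := by omega
      rw [hA0]
    | succ j ihj =>
      rcases Nat.lt_or_ge A (j+1) with h | h
      · have hAj' : A ≤ j := by omega
        rw [ihj hAj' (by omega)]
        exact hno' j hAj' (by omega)
      · have hA : A = j + 1 := by omega
        rw [hA]
  have h1 := hconst d1 hd1.1 hd1.2.1
  have h2 := hconst d2 hd2.1 hd2.2.1
  exact hd2.2.2 (h2.mp (h1.mpr hd1.2.2))

noncomputable def idxOf (S : Finset ℕ) (x : ℕ) (hx : x ∈ S) : Fin S.card :=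
  (posE S).symm ⟨x, hx⟩

lemma posE_idxOf (S : Finset ℕ) (x : ℕ) (hx : x ∈ S) :
    ((posE S (idxOf S x hx) : ℕ)) = x :=
  congrArg Subtype.val ((posE S).apply_symm_apply _)

lemma idxOf_eq (S : Finset ℕ) (x : ℕ) (hx : x ∈ S) (i : Fin S.card)
    (h : x = ((posE S i : ℕ))) : idxOf S x hx = i :=
  (posE S).toEquiv.symm_apply_eq.mpr (Subtype.ext h)

lemma idxOf_lt_iff (S : Finset ℕ) (x y : ℕ) (hx : x ∈ S) (hy : y ∈ S) :
    idxOf S x hx < idxOf S y hy ↔ x < y := by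
  unfold idxOf
  rw [OrderIso.lt_iff_lt]
  exact Subtype.mk_lt_mk

lemma patOf_fst (S : Finset ℕ) : (patOf S).1 = S.card := rfl

lemma patOf_snd (S : Finset ℕ) : (patOf S).2 = patPerm S := rfl

lemma sumIndec_patOf_interval (A B : ℕ) (hAB : A ≤ B) :
    SumIndec (patOf ((Finset.Icc A B).image pidx)) := by
  set S : Finset ℕ := (Finset.Icc A B).image pidx with hS
  have hmemS : ∀ d, A ≤ d → d ≤ B → pidx d ∈ S := by
    intro d h1 h2
    rw [hS, Finset.mem_image]
    exact ⟨d, Finset.mem_Icc.mpr ⟨h1, h2⟩, rfl⟩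
  have hcardS : S.card = B + 1 - A := by
    rw [hS, Finset.card_image_of_injective _ pidx_inj, Nat.card_Icc]
  have hpos : 0 < (patOf S).1 := by
    rw [patOf_fst]; omega
  refine ⟨hpos, fun hdec => ?_⟩
  obtain ⟨k, hk, hkn, hsplit⟩ := decomposable_split _ hdec
  have hkn' : k < S.card := by rwa [patOf_fst] at hkn
  have hsplit' : ∀ i : Fin S.card, i.val < k ↔ (patPerm S i).val < k := fun i => hsplit i
  have hall : ∀ i : Fin S.card, ∃ d, ∃ h1 : A ≤ d, ∃ h2 : d ≤ B,
      idxOf S (pidx d) (hmemS d h1 h2) = i := by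
    intro i
    have hx : ((posE S i : ℕ)) ∈ (Finset.Icc A B).image pidx := by
      rw [← hS]; exact (posE S i).2
    rw [Finset.mem_image] at hx
    obtain ⟨d, hd, hdx⟩ := hx
    rw [Finset.mem_Icc] at hd
    exact ⟨d, hd.1, hd.2, idxOf_eq S _ _ i hdx⟩
  obtain ⟨dt, h1t, h2t, hit⟩ := hall ⟨0, by omega⟩
  obtain ⟨df, h1f, h2f, hif⟩ := hall ⟨k, by omega⟩
  set Q : ℕ → Prop := fun d =>
    ∃ h1 : A ≤ d, ∃ h2 : d ≤ B, (idxOf S (pidx d) (hmemS d h1 h2)).val < k with hQ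
  have hQt : Q dt := ⟨h1t, h2t, by rw [hit]; simpa using hk⟩
  have hQf : ¬ Q df := by
    rintro ⟨h1', h2', hlt⟩
    have hlt' : (idxOf S (pidx df) (hmemS df h1f h2f)).val < k := hlt
    rw [hif] at hlt'
    simp at hlt'
  obtain ⟨d, hAd, hdB, hflip⟩ := flip_exists Q ⟨h1t, h2t, hQt⟩ ⟨h1f, h2f, hQf⟩
  have h2d : d ≤ B := le_of_lt hdB
  have hd1B : d + 1 ≤ B := hdB
  have hAd1 : A ≤ d + 1 := le_trans hAd (Nat.le_succ d)
  have hlt12 := idxOf_lt_iff S (pidx d) (pidx (d+1)) (hmemS d hAd h2d) (hmemS (d+1) hAd1 hd1B)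
  have hlt21 := idxOf_lt_iff S (pidx (d+1)) (pidx d) (hmemS (d+1) hAd1 hd1B) (hmemS d hAd h2d)
  have hv12 : patPerm S (idxOf S (pidx d) (hmemS d hAd h2d)) <
      patPerm S (idxOf S (pidx (d+1)) (hmemS (d+1) hAd1 hd1B)) ↔
      osc0 (pidx d) < osc0 (pidx (d+1)) := by
    rw [patPerm_lt_iff, posE_idxOf, posE_idxOf]
  have hv21 : patPerm S (idxOf S (pidx (d+1)) (hmemS (d+1) hAd1 hd1B)) <
      patPerm S (idxOf S (pidx d) (hmemS d hAd h2d)) ↔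
      osc0 (pidx (d+1)) < osc0 (pidx d) := by
    rw [patPerm_lt_iff, posE_idxOf, posE_idxOf]
  have hinv := adj_inversion d
  rcases hflip with ⟨hq1, hq2⟩ | ⟨hq1, hq2⟩
  · obtain ⟨h1', h2', hval⟩ := hq1
    have hv1 : (idxOf S (pidx d) (hmemS d hAd h2d)).val < k := hval
    have hv2 : ¬ (idxOf S (pidx (d+1)) (hmemS (d+1) hAd1 hd1B)).val < k :=
      fun h => hq2 ⟨hAd1, hd1B, h⟩
    have hp1 := (hsplit' _).mp hv1
    have hp2 : ¬ (patPerm S (idxOf S (pidx (d+1)) (hmemS (d+1) hAd1 hd1B))).val < k :=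
      fun h => hv2 ((hsplit' _).mpr h)
    have hplt : patPerm S (idxOf S (pidx d) (hmemS d hAd h2d)) <
        patPerm S (idxOf S (pidx (d+1)) (hmemS (d+1) hAd1 hd1B)) := by
      rw [Fin.lt_def]; omega
    have hosc := hv12.mp hplt
    rcases hinv with ⟨hpos', hval'⟩ | ⟨hpos', hval'⟩
    · omega
    · have h21 := hlt21.mpr hpos'
      rw [Fin.lt_def] at h21
      omega
  · obtain ⟨h1', h2', hval⟩ := hq2
    have hv2 : (idxOf S (pidx (d+1)) (hmemS (d+1) hAd1 hd1B)).val < k := hval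
    have hv1 : ¬ (idxOf S (pidx d) (hmemS d hAd h2d)).val < k :=
      fun h => hq1 ⟨hAd, h2d, h⟩
    have hp2 := (hsplit' _).mp hv2
    have hp1 : ¬ (patPerm S (idxOf S (pidx d) (hmemS d hAd h2d))).val < k :=
      fun h => hv1 ((hsplit' _).mpr h)
    have hplt : patPerm S (idxOf S (pidx (d+1)) (hmemS (d+1) hAd1 hd1B)) <
        patPerm S (idxOf S (pidx d) (hmemS d hAd h2d)) := by
      rw [Fin.lt_def]; omega
    have hosc := hv21.mp hplt
    rcases hinv with ⟨hpos', hval'⟩ | ⟨hpos', hval'⟩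
    · have h12 := hlt12.mpr hpos'
      rw [Fin.lt_def] at h12
      omega
    · omega

end SioAux
open SioAux in
/-- SIO has no incompatible pairs: for any two sum-indecomposable
π, θ ∈ SIO, the direct sum π ⊕ θ is contained in a sum-indecomposable member of
SIO of size at most |π| + |θ| + 2. -/
theorem sio_no_incompatible_pairs (p q : Pattern)
    (hp : InSIO p) (hq : InSIO q) (hip : SumIndec p) (hiq : SumIndec q) :
    ∃ r : Pattern, InSIO r ∧ SumIndec r ∧ r.1 ≤ p.1 + q.1 + 2 ∧
      Contains (sumP p q) r := by
  classical
  obtain ⟨f, hfm, hfp⟩ := hp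
  obtain ⟨g, hgm, hgp⟩ := hq
  have hm : 0 < p.1 := hip.1
  have hn : 0 < q.1 := hiq.1
  obtain ⟨a, hfa⟩ := embed_bounds p hip f hfm hfp
  obtain ⟨b, hgb0⟩ := embed_bounds q hiq g hgm hgp
  obtain ⟨f', hf'm, hf'p, hf'i⟩ := shift_embed p f hfm hfp (b+1)
  set a1 := a + 2*(b+1) with ha1
  have hfb : ∀ i, a1 ≤ pidx (f' i) ∧ pidx (f' i) < a1 + p.1 := by
    intro i
    have h1 := hfa i
    have h2 := hf'i i
    omega
  set e := a1 + p.1 - 1 with he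
  obtain ⟨b1, hbb1, hb1par, hb1lo, hb1hi⟩ :
      ∃ b1, b ≤ b1 ∧ b1 % 2 = b % 2 ∧ e + 2 ≤ b1 ∧ b1 ≤ e + 3 := by
    refine ⟨if (e+2) % 2 = b % 2 then e+2 else e+3, ?_, ?_, ?_, ?_⟩ <;> split_ifs <;> omega
  obtain ⟨g', hg'm, hg'p, hg'i⟩ := shift_embed q g hgm hgp ((b1 - b)/2)
  have hgb : ∀ j, b1 ≤ pidx (g' j) ∧ pidx (g' j) < b1 + q.1 := by
    intro j
    have h1 := hgb0 j
    have h2 := hg'i j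
    omega
  have hAB : a1 ≤ b1 + q.1 - 1 := by omega
  refine ⟨patOf ((Finset.Icc a1 (b1 + q.1 - 1)).image pidx), inSIO_patOf _,
    sumIndec_patOf_interval a1 (b1 + q.1 - 1) hAB, ?_, ?_⟩
  · show ((Finset.Icc a1 (b1 + q.1 - 1)).image pidx).card ≤ p.1 + q.1 + 2
    rw [Finset.card_image_of_injective _ pidx_inj, Nat.card_Icc]
    omega
  · have hcross : ∀ i j, f' i < g' j ∧ osc0 (f' i) < osc0 (g' j) := by
      intro i j
      have h1 := hfb i
      have h2 := hgb j
      have hs := sep (e := e) (k := pidx (f' i)) (k' := pidx (g' j)) (by omega) (by omega)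
      rwa [pidx_pidx, pidx_pidx] at hs
    set h : Fin (p.1 + q.1) → ℕ := fun i =>
      if hc : i.val < p.1 then f' ⟨i.val, hc⟩
      else g' ⟨i.val - p.1, by have := i.isLt; omega⟩ with hh
    have hhm : StrictMono h := by
      intro s t hst
      have hstv : s.val < t.val := hst
      rw [hh]
      simp only
      by_cases hs : s.val < p.1 <;> by_cases ht : t.val < p.1
      · rw [dif_pos hs, dif_pos ht]
        exact hf'm (Fin.mk_lt_mk.mpr hstv)
      · rw [dif_pos hs, dif_neg ht]
        exact (hcross _ _).1
      · omega
      · rw [dif_neg hs, dif_neg ht]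
        exact hg'm (Fin.mk_lt_mk.mpr (by omega))
    have hpat : ∀ s t : Fin (p.1 + q.1),
        (sumPerm p.2 q.2) s < (sumPerm p.2 q.2) t ↔ osc0 (h s) < osc0 (h t) := by
      intro s t
      rw [Fin.lt_def, sumPerm_val, sumPerm_val, hh]
      simp only
      by_cases hs : s.val < p.1 <;> by_cases ht : t.val < p.1
      · rw [dif_pos hs, dif_pos ht, dif_pos hs, dif_pos ht, ← Fin.lt_def]
        exact hf'p _ _
      · rw [dif_pos hs, dif_neg ht, dif_pos hs, dif_neg ht]
        constructor
        · intro _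
          exact (hcross _ _).2
        · intro _
          have := (p.2 ⟨s.val, hs⟩).isLt
          omega
      · rw [dif_neg hs, dif_pos ht, dif_neg hs, dif_pos ht]
        constructor
        · intro hlt
          have := (p.2 ⟨t.val, ht⟩).isLt
          omega
        · intro hlt
          exact absurd hlt (not_lt.mpr (le_of_lt (hcross _ _).2))
      · rw [dif_neg hs, dif_neg ht, dif_neg hs, dif_neg ht, add_lt_add_iff_left, ← Fin.lt_def]
        exact hg'p _ _
    have hrange : ∀ i, h i ∈ (Finset.Icc a1 (b1 + q.1 - 1)).image pidx := by
      intro i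
      rw [hh]
      simp only
      split_ifs with hc
      · rw [Finset.mem_image]
        refine ⟨pidx (f' ⟨i.val, hc⟩), Finset.mem_Icc.mpr ⟨(hfb _).1, ?_⟩, pidx_pidx _⟩
        have := (hfb ⟨i.val, hc⟩).2
        omega
      · rw [Finset.mem_image]
        refine ⟨pidx (g' ⟨i.val - p.1, by have := i.isLt; omega⟩),
          Finset.mem_Icc.mpr ⟨?_, ?_⟩, pidx_pidx _⟩
        · have := (hgb ⟨i.val - p.1, by have := i.isLt; omega⟩).1
          omega
        · have := (hgb ⟨i.val - p.1, by have := i.isLt; omega⟩).2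
          omega
    exact contains_patOf _ (sumP p q) h hhm hpat hrange
end
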